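/- arXiv:2308.15446 — 7 statements merged into one kernel-verified Lean document; each statement's English description precedes it below -/
import Mathlib

section
/- Let p be a prime, a ∈ ℤ_p with |a|_p = 1, b ∈ ℤ_p, and set x_n := n·a + b. Then the p-adic discrepancy satisfies D_N(x_n) = O(1/N), i.e. there is a constant C > 0 such that D_N(x_n) ≤ C/N for all N ∈ ℕ. -/
open MeasureTheory Filter
open scoped Classical

/-- The closed ball `D_p(z,s) = {x ∈ ℤ_p : |x - z|_p ≤ s}`. -/
def padicBall (p : ℕ) [Fact p.Prime] (z : ℤ_[p]) (s : ℝ) : Set ℤ_[p] :=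
  {x : ℤ_[p] | ‖x - z‖ ≤ s}

lemma count_upper (m r0 N : ℕ) (hm : 0 < m) :
    ((Finset.Icc 1 N).filter (fun n => n % m = r0)).card ≤ N / m + 1 := by
  have : ((Finset.Icc 1 N).filter (fun n => n % m = r0)).card
      ≤ (Finset.range (N / m + 1)).card := by
    apply Finset.card_le_card_of_injOn (fun n => n / m)
    · intro n hn
      simp only [Finset.mem_coe, Finset.mem_filter, Finset.mem_Icc] at hn
      simp only [Finset.mem_coe, Finset.mem_range, Nat.lt_succ_iff]
      exact Nat.div_le_div_right hn.1.2
    · intro n1 h1 n2 h2 h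
      simp only [Finset.coe_filter, Finset.mem_Icc, Set.mem_setOf_eq] at h1 h2
      have e1 := Nat.div_add_mod n1 m
      have e2 := Nat.div_add_mod n2 m
      dsimp only at h
      rw [h1.2] at e1
      rw [h2.2] at e2
      rw [h] at e1
      omega
  simpa using this

lemma count_lower (m r0 N : ℕ) (hm : 0 < m) (hr : r0 < m) :
    N / m ≤ ((Finset.Icc 1 N).filter (fun n => n % m = r0)).card := by
  rcases Nat.eq_zero_or_pos r0 with h0 | h0
  · subst h0
    have : (Finset.Icc 1 (N / m)).card
        ≤ ((Finset.Icc 1 N).filter (fun n => n % m = 0)).card := by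
      apply Finset.card_le_card_of_injOn (fun j => j * m)
      · intro j hj
        simp only [Finset.mem_coe, Finset.mem_Icc] at hj
        simp only [Finset.mem_coe, Finset.mem_filter, Finset.mem_Icc, Nat.mul_mod_left, and_true]
        constructor
        · exact Nat.one_le_iff_ne_zero.mpr (Nat.mul_ne_zero (by omega) hm.ne')
        · calc j * m ≤ N / m * m := Nat.mul_le_mul_right m hj.2
            _ ≤ N := Nat.div_mul_le_self N m
      · intro j1 _ j2 _ h
        exact Nat.eq_of_mul_eq_mul_right hm h
    simpa using this
  · have : (Finset.range (N / m)).card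
        ≤ ((Finset.Icc 1 N).filter (fun n => n % m = r0)).card := by
      apply Finset.card_le_card_of_injOn (fun j => r0 + j * m)
      · intro j hj
        simp only [Finset.mem_coe, Finset.mem_range] at hj
        simp only [Finset.mem_coe, Finset.mem_filter, Finset.mem_Icc]
        refine ⟨⟨by omega, ?_⟩, ?_⟩
        · have h1 : (j + 1) * m ≤ N / m * m := Nat.mul_le_mul_right m hj
          have h2 : N / m * m ≤ N := Nat.div_mul_le_self N m
          nlinarith
        · rw [Nat.add_mul_mod_self_right]
          exact Nat.mod_eq_of_lt hr
      · intro j1 _ j2 _ h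
        simp only at h
        exact Nat.eq_of_mul_eq_mul_right hm (by omega)
    simpa using this



/-- The p-adic discrepancy of the first `N` terms of a sequence `x : ℕ → ℤ_[p]`
(indexed starting at 1):
`D_N(x) = sup_{z ∈ ℤ_p, k ∈ ℕ} | #{1 ≤ n ≤ N : x_n ∈ D_p(z, p^{-k})}/N - p^{-k} |`. -/
noncomputable def padicDiscrepancy (p : ℕ) [Fact p.Prime] (x : ℕ → ℤ_[p]) (N : ℕ) : ℝ :=
  ⨆ z : ℤ_[p], ⨆ k : ℕ,
    |(((Finset.Icc 1 N).filter fun n =>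
        x n ∈ padicBall p z ((p : ℝ) ^ (-(k : ℤ)))).card : ℝ) / N - (p : ℝ) ^ (-(k : ℤ))|

/-- `#{1 ≤ i ≠ j ≤ N : |x_i - x_j|_p ≤ t}`. -/
noncomputable def pairCount (p : ℕ) [Fact p.Prime] (x : ℕ → ℤ_[p]) (N : ℕ) (t : ℝ) : ℕ :=
  ((Finset.Icc 1 N ×ˢ Finset.Icc 1 N).filter
    fun ij => ij.1 ≠ ij.2 ∧ ‖x ij.1 - x ij.2‖ ≤ t).card

/-- The pair correlation function
`F_{N,α,p}(s) = (1/N²)·(1/μ(D_p(0, s/N^α)))·#{1 ≤ i ≠ j ≤ N : |x_i - x_j|_p ≤ s/N^α}`. -/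
noncomputable def pairF (p : ℕ) [Fact p.Prime] [MeasurableSpace ℤ_[p]]
    (μ : Measure ℤ_[p]) (x : ℕ → ℤ_[p]) (α : ℝ) (N : ℕ) (s : ℝ) : ℝ :=
  (1 / (N : ℝ) ^ 2) * (1 / (μ (padicBall p 0 (s / (N : ℝ) ^ α))).toReal) *
    (pairCount p x N (s / (N : ℝ) ^ α) : ℝ)

/-- `x` has weak Poissonian pair correlations for `α` (w.r.t. the normalized Haar
measure `μ`) if `F_{N,α,p}(s) → 1` for all `s > 0`. -/
def HasWeakPPC (p : ℕ) [Fact p.Prime] [MeasurableSpace ℤ_[p]] (μ : Measure ℤ_[p])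
    (x : ℕ → ℤ_[p]) (α : ℝ) : Prop :=
  ∀ s : ℝ, 0 < s → Tendsto (fun N : ℕ => pairF p μ x α N s) atTop (nhds 1)

lemma key_bound (p : ℕ) [Fact p.Prime] (a b : ℤ_[p]) (ha : ‖a‖ = 1)
    (N : ℕ) (hN : 1 ≤ N) (z : ℤ_[p]) (k : ℕ) :
    |(((Finset.Icc 1 N).filter fun n : ℕ =>
        ((n : ℤ_[p]) * a + b) ∈ padicBall p z ((p : ℝ) ^ (-(k : ℤ)))).card : ℝ) / N
      - (p : ℝ) ^ (-(k : ℤ))| ≤ 1 / N := by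
  have hp : 1 < p := (Fact.out : p.Prime).one_lt
  set m : ℕ := p ^ k with hmdef
  have hm : 0 < m := Nat.pow_pos (by omega)
  have hua : IsUnit a := PadicInt.isUnit_iff.mpr ha
  set u : ℤ_[p]ˣ := hua.unit with hudef
  have hu : (u : ℤ_[p]) = a := hua.unit_spec
  set w : ℤ_[p] := (z - b) * ↑u⁻¹ with hwdef
  set r : ℕ := w.appr k with hrdef
  have hwr : ‖w - (r : ℤ_[p])‖ ≤ (p : ℝ) ^ (-(k : ℤ)) := by
    rw [PadicInt.norm_le_pow_iff_mem_span_pow]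
    exact PadicInt.appr_spec k w
  -- rewrite filter set
  have hfe : ((Finset.Icc 1 N).filter fun n : ℕ =>
        ((n : ℤ_[p]) * a + b) ∈ padicBall p z ((p : ℝ) ^ (-(k : ℤ))))
      = ((Finset.Icc 1 N).filter fun n => n % m = r % m) := by
    apply Finset.filter_congr
    intro n _
    have hfac : ((n : ℤ_[p]) - w) * a = ((n : ℤ_[p]) * a + b) - z := by
      have h1 : w * a = z - b := by
        have h2 : (↑u⁻¹ : ℤ_[p]) * a = 1 := by rw [← hu]; exact_mod_cast u.inv_mul
        calc w * a = (z - b) * ((↑u⁻¹ : ℤ_[p]) * a) := by ring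
          _ = z - b := by rw [h2, mul_one]
      rw [sub_mul, h1]; ring
    have hnorm : ‖((n : ℤ_[p]) * a + b) - z‖ = ‖(n : ℤ_[p]) - w‖ := by
      rw [← hfac, norm_mul, ha, mul_one]
    have tri : ∀ x y c : ℤ_[p], ‖x - y‖ ≤ (p : ℝ) ^ (-(k : ℤ)) →
        ‖y - c‖ ≤ (p : ℝ) ^ (-(k : ℤ)) → ‖x - c‖ ≤ (p : ℝ) ^ (-(k : ℤ)) := by
      intro x y c h1 h2
      have : ‖(x - y) + (y - c)‖ ≤ max ‖x - y‖ ‖y - c‖ := PadicInt.nonarchimedean _ _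
      rw [show (x - y) + (y - c) = x - c by ring] at this
      exact this.trans (max_le h1 h2)
    have hmid : ‖(n : ℤ_[p]) - w‖ ≤ (p : ℝ) ^ (-(k : ℤ))
        ↔ ‖(n : ℤ_[p]) - (r : ℤ_[p])‖ ≤ (p : ℝ) ^ (-(k : ℤ)) := by
      constructor
      · intro h; exact tri _ w _ h hwr
      · intro h
        have hrw : ‖(r : ℤ_[p]) - w‖ ≤ (p : ℝ) ^ (-(k : ℤ)) := by
          rw [← norm_neg]; simpa using hwr
        exact tri _ (r : ℤ_[p]) _ h hrw
    have hcast : ‖(n : ℤ_[p]) - (r : ℤ_[p])‖ = ‖(((n : ℤ) - (r : ℤ) : ℤ) : ℤ_[p])‖ := by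
      push_cast; ring_nf
    have hdvd : ‖(((n : ℤ) - (r : ℤ) : ℤ) : ℤ_[p])‖ ≤ (p : ℝ) ^ (-(k : ℤ))
        ↔ ((p : ℤ) ^ k ∣ (n : ℤ) - (r : ℤ)) := PadicInt.norm_int_le_pow_iff_dvd
    simp only [padicBall, Set.mem_setOf_eq]
    rw [hnorm, hmid, hcast, hdvd]
    constructor
    · intro h
      have : r ≡ n [MOD m] := by
        rw [Nat.modEq_iff_dvd]
        exact_mod_cast h
      exact this.symm
    · intro h
      have : r ≡ n [MOD m] := Nat.ModEq.symm h
      rw [Nat.modEq_iff_dvd] at this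
      exact_mod_cast this
  rw [hfe]
  -- counting bounds
  set c : ℕ := ((Finset.Icc 1 N).filter fun n => n % m = r % m).card with hcdef
  have hub : c ≤ N / m + 1 := count_upper m (r % m) N hm
  have hlb : N / m ≤ c := count_lower m (r % m) N hm (Nat.mod_lt r hm)
  set q : ℕ := N / m with hqdef
  have hq1 : q * m ≤ N := Nat.div_mul_le_self N m
  have hq2 : N < (q + 1) * m := by
    have e := Nat.div_add_mod N m
    have l := Nat.mod_lt N hm
    rw [← hqdef] at e
    nlinarith
  -- real arithmetic
  have hpk : (p : ℝ) ^ (-(k : ℤ)) = 1 / (m : ℝ) := by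
    rw [zpow_neg, zpow_natCast, hmdef]
    push_cast
    rw [one_div]
  have hNpos : (0 : ℝ) < N := by exact_mod_cast hN
  have hmpos : (0 : ℝ) < m := by exact_mod_cast hm
  have h1 : (c : ℝ) * m ≤ (N : ℝ) + m := by
    have : c * m ≤ N + m := by nlinarith [Nat.mul_le_mul_right m hub]
    exact_mod_cast this
  have h2 : (N : ℝ) ≤ (c : ℝ) * m + m := by
    have : N ≤ c * m + m := by nlinarith [Nat.mul_le_mul_right m hlb]
    exact_mod_cast this
  rw [hpk, abs_le]
  have key1 : (1:ℝ)/m ≤ (c:ℝ)/N + 1/N := by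
    rw [← add_div, div_le_div_iff₀ hmpos hNpos]
    nlinarith
  have key2 : (c:ℝ)/N ≤ 1/N + 1/m := by
    rw [div_add_div _ _ hNpos.ne' hmpos.ne', div_le_div_iff₀ hNpos (by positivity)]
    nlinarith [mul_le_mul_of_nonneg_right h1 hNpos.le]
  constructor <;> linarith

/-- Theorem (Beer): for `a` a unit in `ℤ_p` and `x_n = n·a + b`, the p-adic
discrepancy satisfies `D_N(x_n) = O(1/N)`. -/
theorem kronecker_discrepancy_isBigO
    (p : ℕ) [Fact p.Prime] (a b : ℤ_[p]) (ha : ‖a‖ = 1) :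
    ∃ C : ℝ, 0 < C ∧ ∀ N : ℕ, 1 ≤ N →
      padicDiscrepancy p (fun n => (n : ℤ_[p]) * a + b) N ≤ C / N := by
  refine ⟨1, one_pos, fun N hN => ?_⟩
  unfold padicDiscrepancy
  apply ciSup_le
  intro z
  apply ciSup_le
  intro k
  simpa using key_bound p a b ha N hN z k
end

section
/- Let p be a prime and 0 ≤ α ≤ 1. If a sequence (x_n)_{n∈ℕ} ⊂ ℤ_p has weak Poissonian pair correlations for α, then its p-adic discrepancy tends to zero: lim_{N→∞} D_N(x_n) = 0. -/
open MeasureTheory Filter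
open scoped Classical

section
variable (p : ℕ) [hp : Fact p.Prime] (x : ℕ → ℤ_[p])


lemma norm_le_q_iff (m : ℕ) (y : ℤ_[p]) :
    ‖y‖ ≤ (p:ℝ)^(-(m:ℤ)) ↔ PadicInt.toZModPow m y = 0 := by
  rw [PadicInt.norm_le_pow_iff_mem_span_pow, ← PadicInt.ker_toZModPow, RingHom.mem_ker]

lemma mem_ball_iff (m : ℕ) (z x : ℤ_[p]) :
    x ∈ padicBall p z ((p:ℝ)^(-(m:ℤ))) ↔
      PadicInt.toZModPow m x = PadicInt.toZModPow m z := by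
  rw [padicBall, Set.mem_setOf_eq, norm_le_q_iff, map_sub, sub_eq_zero]

lemma padicBall_eq_closedBall (z : ℤ_[p]) (s : ℝ) :
    padicBall p z s = Metric.closedBall z s := by
  ext x; simp [padicBall, Metric.mem_closedBall, dist_eq_norm]

lemma measurable_padicBall [MeasurableSpace ℤ_[p]] [BorelSpace ℤ_[p]] (z : ℤ_[p]) (s : ℝ) :
    MeasurableSet (padicBall p z s) := by
  rw [padicBall_eq_closedBall]; exact measurableSet_closedBall

lemma measure_padicBall [MeasurableSpace ℤ_[p]] [BorelSpace ℤ_[p]]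
    (μ : Measure ℤ_[p]) [μ.IsAddHaarMeasure] [IsProbabilityMeasure μ] (m : ℕ) (z : ℤ_[p]) :
    μ (padicBall p z ((p:ℝ)^(-(m:ℤ)))) = ((p:ENNReal)^m)⁻¹ := by
  haveI : NeZero (p^m) := ⟨pow_ne_zero m hp.out.ne_zero⟩
  have htrans : ∀ w : ℤ_[p], μ (padicBall p w ((p:ℝ)^(-(m:ℤ)))) =
      μ (padicBall p 0 ((p:ℝ)^(-(m:ℤ)))) := by
    intro w
    have : padicBall p w ((p:ℝ)^(-(m:ℤ))) =
        (fun x => -w + x) ⁻¹' (padicBall p 0 ((p:ℝ)^(-(m:ℤ)))) := by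
      ext x; simp [padicBall, neg_add_eq_sub]
    rw [this, measure_preimage_add]
  have hmem : ∀ (a : ZMod (p^m)) (x : ℤ_[p]),
      x ∈ padicBall p ((a.val : ℤ_[p])) ((p:ℝ)^(-(m:ℤ))) ↔ PadicInt.toZModPow m x = a := by
    intro a x
    rw [mem_ball_iff, map_natCast, ZMod.natCast_rightInverse a]
  have hcover : (Set.univ : Set ℤ_[p]) =
      ⋃ a : ZMod (p^m), padicBall p ((a.val : ℤ_[p])) ((p:ℝ)^(-(m:ℤ))) := by
    ext x
    simp only [Set.mem_univ, Set.mem_iUnion, true_iff]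
    exact ⟨PadicInt.toZModPow m x, (hmem _ x).2 rfl⟩
  have hdis : Pairwise (Function.onFun Disjoint
      fun a : ZMod (p^m) => padicBall p ((a.val : ℤ_[p])) ((p:ℝ)^(-(m:ℤ)))) := by
    intro a b hab
    refine Set.disjoint_left.2 fun x hxa hxb => hab ?_
    rw [← (hmem a x).1 hxa, (hmem b x).1 hxb]
  have h1 : (1 : ENNReal) = ∑' a : ZMod (p^m),
      μ (padicBall p ((a.val : ℤ_[p])) ((p:ℝ)^(-(m:ℤ)))) := by
    rw [← measure_iUnion hdis (fun a => measurable_padicBall p _ _), ← hcover,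
      measure_univ]
  rw [tsum_fintype] at h1
  simp only [htrans] at h1
  rw [Finset.sum_const, Finset.card_univ, ZMod.card, nsmul_eq_mul] at h1
  have hp0 : ((p:ENNReal))^m ≠ 0 := pow_ne_zero m (by exact_mod_cast hp.out.ne_zero)
  have hptop : ((p:ENNReal))^m ≠ ⊤ := ENNReal.pow_ne_top (by simp)
  rw [htrans z]
  rw [Nat.cast_pow] at h1
  have := congrArg (fun t => ((p:ENNReal)^m)⁻¹ * t) h1
  simpa [mul_one, ← mul_assoc, ENNReal.inv_mul_cancel hp0 hptop, one_mul] using this.symm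


/-- number of n in [1,N] whose class mod p^m is a -/
noncomputable def cnt (m N : ℕ) (a : ZMod (p^m)) : ℕ :=
  ((Finset.Icc 1 N).filter fun n => PadicInt.toZModPow m (x n) = a).card

lemma sum_cnt (m N : ℕ) : ∑ a : ZMod (p^m), cnt p x m N a = N := by
  have := (Finset.card_eq_sum_card_fiberwise
    (f := fun n => PadicInt.toZModPow m (x n)) (s := Finset.Icc 1 N) (t := Finset.univ)
    (fun n _ => Finset.mem_univ _))
  simp only [Nat.card_Icc, Nat.add_sub_cancel] at this
  simp only [cnt]
  exact this.symm

lemma pairCount_eq (m N : ℕ) (t : ℝ)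
    (ht : ∀ y : ℤ_[p], ‖y‖ ≤ t ↔ PadicInt.toZModPow m y = 0) :
    pairCount p x N t + N = ∑ a : ZMod (p^m), (cnt p x m N a)^2 := by
  set T := Finset.Icc 1 N with hT
  set f : ℕ → ZMod (p^m) := fun n => PadicInt.toZModPow m (x n) with hf
  have hcond : ∀ ij : ℕ × ℕ, (‖x ij.1 - x ij.2‖ ≤ t) ↔ f ij.1 = f ij.2 := by
    intro ij; rw [ht, hf, map_sub, sub_eq_zero]
  have hPC : pairCount p x N t
      = (((T ×ˢ T).filter fun ij => f ij.1 = f ij.2).filter fun ij => ¬ ij.1 = ij.2).card := by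
    rw [pairCount, Finset.filter_filter]
    congr 1
    apply Finset.filter_congr
    intro ij _
    rw [hcond ij]
    tauto
  have hdiag : (((T ×ˢ T).filter fun ij => f ij.1 = f ij.2).filter
      fun ij => ij.1 = ij.2).card = N := by
    have : ((T ×ˢ T).filter fun ij => f ij.1 = f ij.2).filter (fun ij => ij.1 = ij.2)
        = T.diag := by
      rw [Finset.filter_filter]
      ext ij
      simp only [Finset.mem_filter, Finset.mem_product, Finset.mem_diag]
      constructor
      · rintro ⟨⟨h1, _⟩, _, h⟩; exact ⟨h1, h⟩
      · rintro ⟨h1, h⟩; exact ⟨⟨h1, h ▸ h1⟩, by rw [h], h⟩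
    rw [this, Finset.diag_card, hT, Nat.card_Icc]
    omega
  have hkey : ((T ×ˢ T).filter fun ij => f ij.1 = f ij.2).card
      = ∑ a : ZMod (p^m), (cnt p x m N a)^2 := by
    have hun : (T ×ˢ T).filter (fun ij => f ij.1 = f ij.2)
        = Finset.univ.biUnion (fun a : ZMod (p^m) =>
            (T.filter fun n => f n = a) ×ˢ (T.filter fun n => f n = a)) := by
      ext ij
      simp only [Finset.mem_filter, Finset.mem_product, Finset.mem_biUnion, Finset.mem_univ,
        true_and]
      constructor
      · rintro ⟨⟨h1, h2⟩, h3⟩; exact ⟨f ij.1, ⟨h1, rfl⟩, ⟨h2, h3.symm⟩⟩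
      · rintro ⟨a, ⟨h1, e1⟩, h2, e2⟩; exact ⟨⟨h1, h2⟩, by rw [e1, e2]⟩
    rw [hun, Finset.card_biUnion]
    · apply Finset.sum_congr rfl
      intro a _
      rw [Finset.card_product, cnt, sq]
    · intro a _ b _ hab
      apply Finset.disjoint_left.2
      intro ij hija hijb
      simp only [Finset.mem_product, Finset.mem_filter] at hija hijb
      exact hab (hija.1.2 ▸ hijb.1.2)
  rw [hPC, ← hkey, ← hdiag]
  rw [add_comm]
  exact Finset.card_filter_add_card_filter_not _

instance neZeroPPow (m : ℕ) : NeZero (p^m) :=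
  ⟨pow_ne_zero m (Nat.Prime.ne_zero Fact.out)⟩

noncomputable def fib (k m : ℕ) (hkm : k ≤ m) (b : ZMod (p^k)) : Finset (ZMod (p^m)) :=
  Finset.univ.filter fun a : ZMod (p^m) =>
    ZMod.castHom (pow_dvd_pow p hkm) (ZMod (p^k)) a = b

lemma psi_lift (k m : ℕ) (hkm : k ≤ m) (b : ZMod (p^k)) :
    ZMod.castHom (pow_dvd_pow p hkm) (ZMod (p^k)) ((b.val : ZMod (p^m))) = b := by
  haveI : NeZero (p^k) := ⟨pow_ne_zero k (Nat.Prime.ne_zero Fact.out)⟩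
  rw [map_natCast]
  exact ZMod.natCast_rightInverse b

lemma fib_card (k m : ℕ) (hkm : k ≤ m) (b : ZMod (p^k)) :
    (fib p k m hkm b).card = p^(m-k) := by
  haveI : NeZero (p^k) := ⟨pow_ne_zero k (Nat.Prime.ne_zero Fact.out)⟩
  haveI : NeZero (p^m) := ⟨pow_ne_zero m (Nat.Prime.ne_zero Fact.out)⟩
  set ψ := ZMod.castHom (pow_dvd_pow p hkm) (ZMod (p^k)) with hψ
  have hcard : ∀ b' : ZMod (p^k), (fib p k m hkm b').card = (fib p k m hkm 0).card := by
    intro b'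
    apply Finset.card_bij' (fun a _ => a - ((b'.val : ZMod (p^m))))
      (fun a _ => a + ((b'.val : ZMod (p^m))))
    · intro a ha
      simp only [fib, Finset.mem_filter, Finset.mem_univ, true_and] at ha ⊢
      rw [map_sub, ha, psi_lift p k m hkm, sub_self]
    · intro a ha
      simp only [fib, Finset.mem_filter, Finset.mem_univ, true_and] at ha ⊢
      rw [map_add, ha, psi_lift p k m hkm, zero_add]
    · intro a _; ring
    · intro a _; ring
  have htotal : ∑ b' : ZMod (p^k), (fib p k m hkm b').card = p^m := by
    have := Finset.card_eq_sum_card_fiberwise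
      (f := fun a : ZMod (p^m) => ψ a) (s := Finset.univ) (t := Finset.univ)
      (fun a _ => Finset.mem_univ _)
    simp only [Finset.card_univ, ZMod.card] at this
    simp only [fib, hψ]
    exact this.symm
  rw [hcard b]
  have h2 : ∑ b' : ZMod (p^k), (fib p k m hkm b').card
      = p^k * (fib p k m hkm 0).card := by
    rw [Finset.sum_congr rfl (fun b' _ => hcard b'), Finset.sum_const, Finset.card_univ,
      ZMod.card, smul_eq_mul]
  have h3 : (p:ℕ)^m = p^k * p^(m-k) := by
    rw [← pow_add]
    congr 1
    omega
  exact Nat.eq_of_mul_eq_mul_left (pow_pos (Nat.Prime.pos Fact.out) k) ((h2.symm.trans htotal).trans h3)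

lemma cnt_coarse (k m : ℕ) (hkm : k ≤ m) (N : ℕ) (b : ZMod (p^k)) :
    cnt p x k N b = ∑ a ∈ fib p k m hkm b, cnt p x m N a := by
  have hcomp : ∀ y : ℤ_[p],
      ZMod.castHom (pow_dvd_pow p hkm) (ZMod (p^k)) (PadicInt.toZModPow m y)
        = PadicInt.toZModPow k y := by
    intro y
    exact RingHom.congr_fun (PadicInt.zmod_cast_comp_toZModPow k m hkm) y
  rw [cnt]
  rw [Finset.card_eq_sum_card_fiberwise
    (f := fun n => PadicInt.toZModPow m (x n))
    (s := (Finset.Icc 1 N).filter fun n => PadicInt.toZModPow k (x n) = b)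
    (t := fib p k m hkm b)
    (fun n hn => by
      simp only [Finset.mem_coe, Finset.mem_filter, Finset.coe_filter, Set.mem_setOf_eq] at hn
      simp only [fib, Finset.mem_coe, Finset.mem_filter, Finset.mem_univ, true_and]
      rw [hcomp, hn.2])]
  apply Finset.sum_congr rfl
  intro a ha
  simp only [fib, Finset.mem_filter, Finset.mem_univ, true_and] at ha
  rw [cnt]
  congr 1
  rw [Finset.filter_filter]
  apply Finset.filter_congr
  intro n _
  constructor
  · rintro ⟨_, h⟩; exact h
  · intro h; exact ⟨by rw [← hcomp (x n), h, ha], h⟩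

lemma refine_sq_sum (k m : ℕ) (hkm : k ≤ m) (N : ℕ) :
    (∑ b : ZMod (p^k), ((cnt p x k N b : ℝ))^2)
      ≤ (p:ℝ)^(m-k) * ∑ a : ZMod (p^m), ((cnt p x m N a : ℝ))^2 := by
  have hperb : ∀ b : ZMod (p^k), ((cnt p x k N b : ℝ))^2
      ≤ (p:ℝ)^(m-k) * ∑ a ∈ fib p k m hkm b, ((cnt p x m N a : ℝ))^2 := by
    intro b
    rw [cnt_coarse p x k m hkm N b]
    push_cast
    have := sq_sum_le_card_mul_sum_sq
      (s := fib p k m hkm b) (f := fun a => ((cnt p x m N a : ℝ)))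
    calc ((∑ a ∈ fib p k m hkm b, (cnt p x m N a : ℝ)))^2
        ≤ (fib p k m hkm b).card * ∑ a ∈ fib p k m hkm b, ((cnt p x m N a : ℝ))^2 := this
      _ = (p:ℝ)^(m-k) * ∑ a ∈ fib p k m hkm b, ((cnt p x m N a : ℝ))^2 := by
          rw [fib_card]; push_cast; ring
  calc (∑ b : ZMod (p^k), ((cnt p x k N b : ℝ))^2)
      ≤ ∑ b : ZMod (p^k), (p:ℝ)^(m-k) * ∑ a ∈ fib p k m hkm b, ((cnt p x m N a : ℝ))^2 :=
        Finset.sum_le_sum (fun b _ => hperb b)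
    _ = (p:ℝ)^(m-k) * ∑ b : ZMod (p^k), ∑ a ∈ fib p k m hkm b, ((cnt p x m N a : ℝ))^2 := by
        rw [Finset.mul_sum]
    _ = (p:ℝ)^(m-k) * ∑ a : ZMod (p^m), ((cnt p x m N a : ℝ))^2 := by
        congr 1
        exact Finset.sum_fiberwise_of_maps_to (fun a _ => Finset.mem_univ _) _


noncomputable def mdeg (r : ℝ) : ℕ := sInf {n : ℕ | (p:ℝ)^(-(n:ℤ)) ≤ r}

lemma mdeg_nonempty {r : ℝ} (hr : 0 < r) : {n : ℕ | (p:ℝ)^(-(n:ℤ)) ≤ r}.Nonempty := by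
  obtain ⟨k, hk⟩ := PadicInt.exists_pow_neg_lt p hr
  exact ⟨k, hk.le⟩

lemma mdeg_spec {r : ℝ} (hr : 0 < r) : (p:ℝ)^(-(mdeg p r:ℤ)) ≤ r :=
  Nat.sInf_mem (mdeg_nonempty p hr)

lemma one_lt_p : (1:ℝ) < p := by exact_mod_cast hp.out.one_lt

lemma mdeg_ge {r : ℝ} (hr : 0 < r) {k : ℕ} (hk : r ≤ (p:ℝ)^(-(k:ℤ))) : k ≤ mdeg p r := by
  have h1 := mdeg_spec p hr
  have := h1.trans hk
  have hlt := one_lt_p p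
  have := (zpow_le_zpow_iff_right₀ hlt).1 this
  omega

lemma norm_le_iff_mdeg {r : ℝ} (hr : 0 < r) (y : ℤ_[p]) :
    ‖y‖ ≤ r ↔ PadicInt.toZModPow (mdeg p r) y = 0 := by
  constructor
  · intro hy
    rw [← norm_le_q_iff]
    rcases Nat.eq_zero_or_pos (mdeg p r) with h0 | hpos
    · rw [h0]
      simpa using y.norm_le_one
    · have hnot : ¬ ((p:ℝ)^(-(mdeg p r - 1 : ℕ):ℤ) ≤ r) := by
        have := Nat.notMem_of_lt_sInf (s := {n : ℕ | (p:ℝ)^(-(n:ℤ)) ≤ r})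
          (show mdeg p r - 1 < mdeg p r by omega)
        exact this
      push_neg at hnot
      have hlt : ‖y‖ < (p:ℝ)^(-(mdeg p r:ℤ) + 1) := by
        refine lt_of_le_of_lt hy (lt_of_lt_of_le hnot ?_)
        apply le_of_eq
        congr 1
        push_cast [Nat.cast_sub hpos]
        ring
      exact (PadicInt.norm_le_pow_iff_norm_lt_pow_add_one y _).2 hlt
  · intro hy
    exact le_trans ((norm_le_q_iff p _ y).2 hy) (mdeg_spec p hr)

lemma mdeg_pow_le {r : ℝ} (hr : 0 < r) (hr1 : r ≤ 1) :
    (p:ℝ)^(mdeg p r) ≤ p / r := by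
  have hp1 : (1:ℝ) < p := one_lt_p p
  rcases Nat.eq_zero_or_pos (mdeg p r) with h0 | hpos
  · rw [h0, pow_zero]
    rw [le_div_iff₀ hr]
    calc (1:ℝ) * r = r := one_mul r
    _ ≤ 1 := hr1
    _ ≤ p := by linarith
  · have hnot : ¬ ((p:ℝ)^(-(mdeg p r - 1 : ℕ):ℤ) ≤ r) := by
      exact Nat.notMem_of_lt_sInf (s := {n : ℕ | (p:ℝ)^(-(n:ℤ)) ≤ r})
        (show mdeg p r - 1 < mdeg p r by omega)
    push_neg at hnot
    have hppos : (0:ℝ) < p := by linarith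
    have hpowpos : (0:ℝ) < (p:ℝ)^(mdeg p r) := pow_pos hppos _
    have key : (p:ℝ)^(mdeg p r) * r < p := by
      calc (p:ℝ)^(mdeg p r) * r < (p:ℝ)^(mdeg p r) * (p:ℝ)^(-(mdeg p r - 1:ℕ):ℤ) :=
            mul_lt_mul_of_pos_left hnot hpowpos
        _ = p := by
            rw [← zpow_natCast (p:ℝ) (mdeg p r), ← zpow_add₀ (ne_of_gt hppos)]
            have he : (mdeg p r : ℤ) + (-(mdeg p r - 1:ℕ):ℤ) = 1 := by
              push_cast [Nat.cast_sub hpos]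
              ring
            rw [he, zpow_one]
    exact (le_div_iff₀ hr).2 key.le


lemma qinv (k : ℕ) : (p:ℝ)^(-(k:ℤ)) = ((p:ℝ)^k)⁻¹ := by
  rw [zpow_neg, zpow_natCast]

lemma disc_count (k N : ℕ) (z : ℤ_[p]) :
    ((Finset.Icc 1 N).filter fun n => x n ∈ padicBall p z ((p:ℝ)^(-(k:ℤ)))).card
      = cnt p x k N (PadicInt.toZModPow k z) := by
  rw [cnt]
  congr 1
  apply Finset.filter_congr
  intro n _
  exact mem_ball_iff p k z (x n)

lemma class_bound (k₀ N : ℕ) (hN : 1 ≤ N) (δ : ℝ) (hδ : 0 ≤ δ)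
    (hsum : ∑ b : ZMod (p^k₀), ((cnt p x k₀ N b : ℝ))^2
      ≤ ((p:ℝ)^k₀)⁻¹ * (N:ℝ)^2 + δ^2 * (N:ℝ)^2) (b : ZMod (p^k₀)) :
    |(cnt p x k₀ N b : ℝ)/N - ((p:ℝ)^k₀)⁻¹| ≤ δ := by
  have hNpos : (0:ℝ) < N := by exact_mod_cast hN
  have hppos : (0:ℝ) < (p:ℝ)^k₀ := pow_pos (by exact_mod_cast hp.out.pos) k₀
  set c : ℝ := N * ((p:ℝ)^k₀)⁻¹ with hc
  have hsumcnt : ∑ b' : ZMod (p^k₀), ((cnt p x k₀ N b' : ℝ)) = N := by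
    have := sum_cnt p x k₀ N
    exact_mod_cast congrArg (Nat.cast (R := ℝ)) this
  have hcard : (Finset.univ : Finset (ZMod (p^k₀))).card = p^k₀ := by
    simp [ZMod.card]
  have hS : ∑ b' : ZMod (p^k₀), ((cnt p x k₀ N b' : ℝ) - c)^2
      = (∑ b' : ZMod (p^k₀), ((cnt p x k₀ N b' : ℝ))^2) - ((p:ℝ)^k₀)⁻¹ * (N:ℝ)^2 := by
    have expand : ∀ t : ℝ, (t - c)^2 = t^2 - 2*c*t + c^2 := fun t => by ring
    simp_rw [expand]
    rw [Finset.sum_add_distrib, Finset.sum_sub_distrib, Finset.sum_const, hcard,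
      ← Finset.mul_sum, hsumcnt, nsmul_eq_mul]
    have : (((p^k₀ : ℕ)) : ℝ) = (p:ℝ)^k₀ := Nat.cast_pow p k₀
    rw [this, hc]
    field_simp
    ring
  have hterm : ((cnt p x k₀ N b : ℝ) - c)^2 ≤ δ^2 * (N:ℝ)^2 := by
    have hle : ((cnt p x k₀ N b : ℝ) - c)^2
        ≤ ∑ b' : ZMod (p^k₀), ((cnt p x k₀ N b' : ℝ) - c)^2 :=
      Finset.single_le_sum (f := fun b' => ((cnt p x k₀ N b' : ℝ) - c)^2)
        (fun b' _ => sq_nonneg _) (Finset.mem_univ b)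
    rw [hS] at hle
    linarith
  have habs : |(cnt p x k₀ N b : ℝ) - c| ≤ δ * N := by
    have h1 := Real.sqrt_le_sqrt hterm
    rw [Real.sqrt_sq_eq_abs] at h1
    have h2 : Real.sqrt (δ^2 * (N:ℝ)^2) = δ * N := by
      rw [← mul_pow, Real.sqrt_sq (by positivity)]
    rw [h2] at h1
    exact h1
  have heq : (cnt p x k₀ N b : ℝ)/N - ((p:ℝ)^k₀)⁻¹ = ((cnt p x k₀ N b : ℝ) - c)/N := by
    rw [hc]
    field_simp
  rw [heq, abs_div, abs_of_pos hNpos, div_le_iff₀ hNpos]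
  exact habs

lemma cnt_mono (k₀ k N : ℕ) (hk : k₀ ≤ k) (z : ℤ_[p]) :
    cnt p x k N (PadicInt.toZModPow k z) ≤ cnt p x k₀ N (PadicInt.toZModPow k₀ z) := by
  apply Finset.card_le_card
  intro n hn
  simp only [cnt, Finset.mem_filter] at hn ⊢
  refine ⟨hn.1, ?_⟩
  have hcomp : ∀ y : ℤ_[p],
      ZMod.castHom (pow_dvd_pow p hk) (ZMod (p^k₀)) (PadicInt.toZModPow k y)
        = PadicInt.toZModPow k₀ y := fun y =>
    RingHom.congr_fun (PadicInt.zmod_cast_comp_toZModPow k₀ k hk) y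
  rw [← hcomp (x n), hn.2, hcomp z]

lemma disc_bound (k₀ N : ℕ) (hN : 1 ≤ N) (δ : ℝ) (hδ : 0 ≤ δ)
    (hcls : ∀ b : ZMod (p^k₀), |(cnt p x k₀ N b : ℝ)/N - ((p:ℝ)^k₀)⁻¹| ≤ δ) :
    padicDiscrepancy p x N ≤ (p:ℝ)^k₀ * δ + ((p:ℝ)^k₀)⁻¹ + δ := by
  have hNpos : (0:ℝ) < N := by exact_mod_cast hN
  have hppos : (0:ℝ) < (p:ℝ)^k₀ := pow_pos (by exact_mod_cast hp.out.pos) k₀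
  have hB : 0 ≤ (p:ℝ)^k₀ * δ + ((p:ℝ)^k₀)⁻¹ + δ := by positivity
  rw [padicDiscrepancy]
  apply Real.iSup_le _ hB
  intro z
  apply Real.iSup_le _ hB
  intro k
  rw [disc_count p x k N z]
  rcases le_or_gt k k₀ with hk | hk
  · rw [cnt_coarse p x k k₀ hk N]
    set S := fib p k k₀ hk (PadicInt.toZModPow k z) with hSdef
    have hfibcard : S.card = p^(k₀-k) := fib_card p k k₀ hk _
    have hpk : (0:ℝ) < (p:ℝ)^k := pow_pos (by exact_mod_cast hp.out.pos) k
    have hcount : ((p^(k₀-k):ℕ):ℝ) * ((p:ℝ)^k₀)⁻¹ = (p:ℝ)^(-(k:ℤ)) := by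
      push_cast
      rw [pow_sub₀ (p:ℝ) (ne_of_gt (by exact_mod_cast hp.out.pos)) hk, qinv]
      field_simp
    have hsplit : ((∑ a ∈ S, cnt p x k₀ N a : ℕ) : ℝ)/N - (p:ℝ)^(-(k:ℤ))
        = ∑ a ∈ S, ((cnt p x k₀ N a : ℝ)/N - ((p:ℝ)^k₀)⁻¹) := by
      rw [Finset.sum_sub_distrib, ← Finset.sum_div, Finset.sum_const, nsmul_eq_mul,
        hfibcard, hcount]
      push_cast
      ring
    rw [hsplit]
    calc |∑ a ∈ S, ((cnt p x k₀ N a : ℝ)/N - ((p:ℝ)^k₀)⁻¹)|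
        ≤ ∑ a ∈ S, |(cnt p x k₀ N a : ℝ)/N - ((p:ℝ)^k₀)⁻¹| := Finset.abs_sum_le_sum_abs _ _
      _ ≤ ∑ _a ∈ S, δ := Finset.sum_le_sum (fun a _ => hcls a)
      _ = (p:ℝ)^(k₀-k) * δ := by
          rw [Finset.sum_const, hfibcard, nsmul_eq_mul]; push_cast; ring
      _ ≤ (p:ℝ)^k₀ * δ := by
          apply mul_le_mul_of_nonneg_right _ hδ
          apply pow_le_pow_right₀ (by exact_mod_cast hp.out.one_le)
          omega
      _ ≤ (p:ℝ)^k₀ * δ + ((p:ℝ)^k₀)⁻¹ + δ := by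
          have h1 : (0:ℝ) ≤ ((p:ℝ)^k₀)⁻¹ := by positivity
          linarith
  · have hmono := cnt_mono p x k₀ k N hk.le z
    have hb := hcls (PadicInt.toZModPow k₀ z)
    rw [abs_le] at hb ⊢
    have hqk : (0:ℝ) < (p:ℝ)^(-(k:ℤ)) := by
      rw [qinv]
      have : (0:ℝ) < (p:ℝ)^k := pow_pos (by exact_mod_cast hp.out.pos) k
      positivity
    have hqle : (p:ℝ)^(-(k:ℤ)) ≤ ((p:ℝ)^k₀)⁻¹ := by
      rw [qinv]
      apply inv_anti₀ hppos
      apply pow_le_pow_right₀ (by exact_mod_cast hp.out.one_le)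
      omega
    constructor
    · have h0 : (0:ℝ) ≤ (cnt p x k N (PadicInt.toZModPow k z) : ℝ)/N := by positivity
      nlinarith
    · have hmono' : (cnt p x k N (PadicInt.toZModPow k z) : ℝ)
          ≤ (cnt p x k₀ N (PadicInt.toZModPow k₀ z) : ℝ) := by exact_mod_cast hmono
      have hup : (cnt p x k N (PadicInt.toZModPow k z) : ℝ)/N
          ≤ (cnt p x k₀ N (PadicInt.toZModPow k₀ z) : ℝ)/N := by gcongr
      nlinarith


lemma sumsq_bound [MeasurableSpace ℤ_[p]] [BorelSpace ℤ_[p]]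
    (μ : Measure ℤ_[p]) [μ.IsAddHaarMeasure] [IsProbabilityMeasure μ]
    (α s : ℝ) (N : ℕ) (hN : 1 ≤ N) (ht : 0 < s/(N:ℝ)^α) (η : ℝ) (hη : 0 ≤ η)
    (hF : pairF p μ x α N s ≤ 1 + η) :
    (∑ a : ZMod (p^(mdeg p (s/(N:ℝ)^α))), ((cnt p x (mdeg p (s/(N:ℝ)^α)) N a : ℝ))^2)
      ≤ (1+η) * (N:ℝ)^2 * ((p:ℝ)^(mdeg p (s/(N:ℝ)^α)))⁻¹ + N := by
  set t := s/(N:ℝ)^α with htdef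
  set m := mdeg p t with hmdef
  have hNpos : (0:ℝ) < N := by exact_mod_cast hN
  have hppos : (0:ℝ) < (p:ℝ)^m := pow_pos (by exact_mod_cast hp.out.pos) m
  have hiff : ∀ y : ℤ_[p], ‖y‖ ≤ t ↔ PadicInt.toZModPow m y = 0 :=
    fun y => norm_le_iff_mdeg p ht y
  have hball : padicBall p 0 t = padicBall p 0 ((p:ℝ)^(-(m:ℤ))) := by
    ext y
    simp only [padicBall, Set.mem_setOf_eq, sub_zero]
    rw [hiff y, norm_le_q_iff]
  have hv : (μ (padicBall p 0 t)).toReal = ((p:ℝ)^m)⁻¹ := by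
    rw [hball, measure_padicBall p μ m 0]
    simp [ENNReal.toReal_inv, ENNReal.toReal_pow]
  have hCeq : (pairCount p x N t : ℝ) + N
      = ∑ a : ZMod (p^m), ((cnt p x m N a : ℝ))^2 := by
    exact_mod_cast congrArg (Nat.cast (R := ℝ)) (pairCount_eq p x m N t hiff)
  have hC : (pairCount p x N t : ℝ) ≤ (1+η) * (N:ℝ)^2 * ((p:ℝ)^m)⁻¹ := by
    have h2 : (pairCount p x N t : ℝ)
        = pairF p μ x α N s * ((N:ℝ)^2 * ((p:ℝ)^m)⁻¹) := by
      rw [pairF, ← htdef, hv]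
      field_simp
    rw [h2, mul_comm (1+η) ((N:ℝ)^2)]
    calc pairF p μ x α N s * ((N:ℝ)^2 * ((p:ℝ)^m)⁻¹)
        ≤ (1+η) * ((N:ℝ)^2 * ((p:ℝ)^m)⁻¹) :=
          mul_le_mul_of_nonneg_right hF (by positivity)
      _ = (N:ℝ)^2 * (1+η) * ((p:ℝ)^m)⁻¹ := by ring
  rw [← hCeq, mul_comm (1+η) ((N:ℝ)^2)] at *
  linarith

lemma main_est [MeasurableSpace ℤ_[p]] [BorelSpace ℤ_[p]]
    (μ : Measure ℤ_[p]) [μ.IsAddHaarMeasure] [IsProbabilityMeasure μ]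
    (α s : ℝ) (k₀ N : ℕ) (hN : 1 ≤ N) (δ : ℝ) (hδ : 0 < δ)
    (ht : 0 < s/(N:ℝ)^α)
    (hm1 : k₀ ≤ mdeg p (s/(N:ℝ)^α))
    (hm2 : (p:ℝ)^(mdeg p (s/(N:ℝ)^α)) ≤ (δ^2/2) * N)
    (hF : pairF p μ x α N s ≤ 1 + δ^2 * (p:ℝ)^k₀ / 2) :
    padicDiscrepancy p x N ≤ (p:ℝ)^k₀ * δ + ((p:ℝ)^k₀)⁻¹ + δ := by
  set t := s/(N:ℝ)^α with htdef
  set m := mdeg p t with hmdef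
  set η : ℝ := δ^2 * (p:ℝ)^k₀ / 2 with hηdef
  have hNpos : (0:ℝ) < N := by exact_mod_cast hN
  have hpne : (p:ℝ) ≠ 0 := by
    have : (0:ℝ) < p := by exact_mod_cast hp.out.pos
    exact ne_of_gt this
  have hpm : (0:ℝ) < (p:ℝ)^m := pow_pos (by exact_mod_cast hp.out.pos) m
  have hpk : (0:ℝ) < (p:ℝ)^k₀ := pow_pos (by exact_mod_cast hp.out.pos) k₀
  have hη : (0:ℝ) ≤ η := by positivity
  have hsum1 := sumsq_bound p x μ α s N hN ht η hη hF
  have hrefine := refine_sq_sum p x k₀ m hm1 N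
  apply disc_bound p x k₀ N hN δ hδ.le
  apply class_bound p x k₀ N hN δ hδ.le
  have hsub : (p:ℝ)^(m-k₀) = (p:ℝ)^m / (p:ℝ)^k₀ := pow_sub₀ (p:ℝ) hpne hm1
  calc ∑ b : ZMod (p^k₀), ((cnt p x k₀ N b : ℝ))^2
      ≤ (p:ℝ)^(m-k₀) * ∑ a : ZMod (p^m), ((cnt p x m N a : ℝ))^2 := hrefine
    _ ≤ (p:ℝ)^(m-k₀) * ((1+η) * (N:ℝ)^2 * ((p:ℝ)^m)⁻¹ + N) := by
        apply mul_le_mul_of_nonneg_left hsum1 (by positivity)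
    _ = (1+η) * (N:ℝ)^2 * ((p:ℝ)^k₀)⁻¹ + (p:ℝ)^(m-k₀) * N := by
        rw [hsub]
        field_simp
    _ ≤ ((p:ℝ)^k₀)⁻¹ * (N:ℝ)^2 + (δ^2/2) * (N:ℝ)^2 + (δ^2/2) * (N:ℝ)^2 := by
        have e1 : (1+η) * (N:ℝ)^2 * ((p:ℝ)^k₀)⁻¹
            = ((p:ℝ)^k₀)⁻¹ * (N:ℝ)^2 + (δ^2/2) * (N:ℝ)^2 := by
          rw [hηdef]
          field_simp
        have e2 : (p:ℝ)^(m-k₀) * N ≤ (δ^2/2) * (N:ℝ)^2 := by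
          have h3 : (p:ℝ)^(m-k₀) ≤ (p:ℝ)^m := by
            apply pow_le_pow_right₀ (by exact_mod_cast hp.out.one_le)
            omega
          calc (p:ℝ)^(m-k₀) * N ≤ ((δ^2/2) * N) * N := by
                apply mul_le_mul_of_nonneg_right (h3.trans hm2) hNpos.le
            _ = (δ^2/2) * (N:ℝ)^2 := by ring
        linarith
    _ = ((p:ℝ)^k₀)⁻¹ * (N:ℝ)^2 + δ^2 * (N:ℝ)^2 := by ring

end

/-- Theorem: if a sequence in `ℤ_p` has weak Poissonian pair correlations for
some `0 ≤ α ≤ 1`, then its p-adic discrepancy tends to zero. -/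
theorem hasWeakPPC_implies_discrepancy_tendsto_zero
    (p : ℕ) [Fact p.Prime] [MeasurableSpace ℤ_[p]] [BorelSpace ℤ_[p]]
    (μ : Measure ℤ_[p]) [μ.IsAddHaarMeasure] [IsProbabilityMeasure μ]
    (α : ℝ) (hα0 : 0 ≤ α) (hα1 : α ≤ 1) (x : ℕ → ℤ_[p])
    (h : HasWeakPPC p μ x α) :
    Tendsto (fun N : ℕ => padicDiscrepancy p x N) atTop (nhds 0) := by
  have hprime : p.Prime := Fact.out
  have hp1R : (1:ℝ) < p := by exact_mod_cast hprime.one_lt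
  rw [Metric.tendsto_atTop]
  intro ε hε
  obtain ⟨k₀, hk₀⟩ : ∃ k₀ : ℕ, ((p:ℝ)^k₀)⁻¹ ≤ ε/8 := by
    obtain ⟨k, hk⟩ := PadicInt.exists_pow_neg_lt p (show (0:ℝ) < ε/8 by linarith)
    refine ⟨k, ?_⟩
    rw [← qinv p k]
    exact hk.le
  have hpk : (0:ℝ) < (p:ℝ)^k₀ := by positivity
  have hpk1 : (1:ℝ) ≤ (p:ℝ)^k₀ := one_le_pow₀ hp1R.le
  set δ : ℝ := ε/8 / (p:ℝ)^k₀ with hδdef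
  have hδpos : 0 < δ := by positivity
  have hfinal : (p:ℝ)^k₀ * δ + ((p:ℝ)^k₀)⁻¹ + δ < ε := by
    have h1 : (p:ℝ)^k₀ * δ = ε/8 := by
      rw [hδdef]
      field_simp
    have h2 : δ ≤ ε/8 := by
      rw [hδdef]
      exact div_le_self (by linarith) hpk1
    linarith
  have key : ∃ s : ℝ, 0 < s ∧ ∀ᶠ N : ℕ in atTop,
      1 ≤ N ∧ 0 < s/(N:ℝ)^α ∧ k₀ ≤ mdeg p (s/(N:ℝ)^α) ∧
        (p:ℝ)^(mdeg p (s/(N:ℝ)^α)) ≤ (δ^2/2) * N := by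
    rcases eq_or_lt_of_le hα1 with hα | hα
    · -- α = 1
      subst hα
      refine ⟨2*(p:ℝ)/δ^2, by positivity, ?_⟩
      have hspos : (0:ℝ) < 2*(p:ℝ)/δ^2 := by positivity
      set c : ℝ := min ((p:ℝ)^(-(k₀:ℤ))) 1 with hcdef
      have hcpos : 0 < c := by
        apply lt_min _ one_pos
        rw [qinv]
        positivity
      have hsN : Tendsto (fun N : ℕ => (2*(p:ℝ)/δ^2)/(N:ℝ)) atTop (nhds 0) :=
        tendsto_const_div_atTop_nhds_zero_nat _
      filter_upwards [hsN.eventually (gt_mem_nhds hcpos), eventually_ge_atTop 1]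
        with N h1 h2
      have hNpos : (0:ℝ) < N := by exact_mod_cast h2
      simp only [Real.rpow_one]
      have ht : 0 < (2*(p:ℝ)/δ^2)/(N:ℝ) := div_pos hspos hNpos
      refine ⟨h2, ht, mdeg_ge p ht ?_, ?_⟩
      · exact (lt_of_lt_of_le h1 (min_le_left _ _)).le
      · have hle1 : (2*(p:ℝ)/δ^2)/(N:ℝ) ≤ 1 := (lt_of_lt_of_le h1 (min_le_right _ _)).le
        have hb := mdeg_pow_le p ht hle1
        have heq : (p:ℝ)/((2*(p:ℝ)/δ^2)/(N:ℝ)) = (δ^2/2) * N := by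
          field_simp
        linarith [hb.trans_eq heq]
    · -- α < 1
      set s : ℝ := ((p:ℝ)^(k₀+1))⁻¹ with hsdef
      have hspos : 0 < s := by positivity
      refine ⟨s, hspos, ?_⟩
      have hcpos : (0:ℝ) < (δ^2/2) * s / p := by positivity
      have htend : Tendsto (fun N : ℕ => (N:ℝ)^(α-1)) atTop (nhds 0) := by
        have := (tendsto_rpow_neg_atTop (show (0:ℝ) < 1-α by linarith)).comp
          tendsto_natCast_atTop_atTop
        simpa [neg_sub, Function.comp_def] using this
      filter_upwards [htend.eventually (gt_mem_nhds hcpos), eventually_ge_atTop 1]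
        with N h1 h2
      have hN1R : (1:ℝ) ≤ N := by exact_mod_cast h2
      have hNpos : (0:ℝ) < N := by linarith
      have hsN1 : (1:ℝ) ≤ (N:ℝ)^α := Real.one_le_rpow hN1R hα0
      have hsNpos : (0:ℝ) < (N:ℝ)^α := by linarith
      have ht : 0 < s/(N:ℝ)^α := div_pos hspos hsNpos
      have hts : s/(N:ℝ)^α ≤ s := div_le_self hspos.le hsN1
      have hsk : s ≤ (p:ℝ)^(-(k₀:ℤ)) := by
        rw [qinv, hsdef]
        apply inv_anti₀ hpk
        apply pow_le_pow_right₀ hp1R.le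
        omega
      have hs1 : s ≤ 1 := by
        rw [hsdef]
        apply inv_le_one_of_one_le₀
        exact one_le_pow₀ hp1R.le
      refine ⟨h2, ht, mdeg_ge p ht (hts.trans hsk), ?_⟩
      have hb := mdeg_pow_le p ht (hts.trans hs1)
      have hNα : (N:ℝ)^α = (N:ℝ)^(α-1) * N := by
        rw [Real.rpow_sub hNpos, Real.rpow_one]
        field_simp
      have hA : (p:ℝ)/s * (N:ℝ)^(α-1) ≤ δ^2/2 := by
        calc (p:ℝ)/s * (N:ℝ)^(α-1)
            ≤ (p:ℝ)/s * ((δ^2/2) * s / p) :=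
              mul_le_mul_of_nonneg_left h1.le (by positivity)
          _ = δ^2/2 := by
              field_simp
      have hB : (p:ℝ)/(s/(N:ℝ)^α) = (p:ℝ)/s * (N:ℝ)^(α-1) * N := by
        rw [hNα]
        field_simp
      have hC : (p:ℝ)/s * (N:ℝ)^(α-1) * N ≤ (δ^2/2) * N :=
        mul_le_mul_of_nonneg_right hA hNpos.le
      rw [hB] at hb
      linarith
  obtain ⟨s, hs, hEv⟩ := key
  have hηlt : (1:ℝ) < 1 + δ^2*(p:ℝ)^k₀/2 := by nlinarith
  have hFev := (h s hs).eventually (gt_mem_nhds hηlt)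
  obtain ⟨N₀, hN₀⟩ := eventually_atTop.1 (hEv.and hFev)
  refine ⟨N₀, fun N hN => ?_⟩
  obtain ⟨⟨hN1, ht, hm1, hm2⟩, hF⟩ := hN₀ N hN
  have hdisc := main_est p x μ α s k₀ N hN1 δ hδpos ht hm1 hm2 hF.le
  have hnonneg : 0 ≤ padicDiscrepancy p x N := by
    rw [padicDiscrepancy]
    exact Real.iSup_nonneg (fun z => Real.iSup_nonneg (fun k => abs_nonneg _))
  rw [Real.dist_eq, sub_zero, abs_of_nonneg hnonneg]
  exact lt_of_le_of_lt hdisc hfinal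
end

section
/- Let p be a prime, a ∈ ℤ_p with |a|_p = 1, and b ∈ ℤ_p arbitrary. Then the sequence (n·a + b)_{n∈ℕ} has weak Poissonian pair correlations for every α with 0 ≤ α < 1. -/
open MeasureTheory Filter
open scoped Classical

namespace KroneckerPPC


variable {p : ℕ} [hp : Fact p.Prime]

lemma ultra (x y : ℤ_[p]) (r : ℝ) (hx : ‖x‖ ≤ r) (hy : ‖y‖ ≤ r) : ‖x - y‖ ≤ r := by
  rw [sub_eq_add_neg]
  refine le_trans (PadicInt.nonarchimedean _ _) ?_
  rw [norm_neg]; exact max_le hx hy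

lemma exists_k (t : ℝ) (ht : 0 < t) :
    ∃ k : ℕ, (∀ x : ℤ_[p], ‖x‖ ≤ t ↔ ‖x‖ ≤ (p : ℝ) ^ (-(k : ℤ))) ∧
      (p : ℝ) ^ k ≤ max 1 ((p : ℝ) / t) := by
  have hp1 : (1 : ℝ) < p := by exact_mod_cast hp.out.one_lt
  have hp0 : (0 : ℝ) < p := by positivity
  have hex : ∃ k : ℕ, (p : ℝ) ^ (-(k : ℤ)) ≤ t := by
    obtain ⟨n, hn⟩ := exists_pow_lt_of_lt_one ht (by
      rw [inv_lt_one_iff₀]; right; exact hp1 : (p : ℝ)⁻¹ < 1)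
    exact ⟨n, by rw [zpow_neg, zpow_natCast, ← inv_pow]; exact hn.le⟩
  classical
  obtain ⟨k, hkle, hmin⟩ : ∃ k : ℕ, (p : ℝ) ^ (-(k : ℤ)) ≤ t ∧
      ∀ m, m < k → ¬ (p : ℝ) ^ (-(m : ℤ)) ≤ t :=
    ⟨Nat.find hex, Nat.find_spec hex, fun m hm => Nat.find_min hex hm⟩
  refine ⟨k, ?_, ?_⟩
  · intro x
    constructor
    · intro hx
      cases k with
      | zero => simpa using x.norm_le_one
      | succ k' =>
        have hk' : t < (p : ℝ) ^ (-(k' : ℤ)) :=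
          not_le.mp (hmin k' (Nat.lt_succ_self k'))
        have h1 : ‖x‖ < (p : ℝ) ^ (-((k' : ℤ) + 1) + 1) := by
          have : (-((k' : ℤ) + 1) + 1) = -(k' : ℤ) := by ring
          rw [this]
          exact lt_of_le_of_lt hx hk'
        have h2 := (PadicInt.norm_le_pow_iff_norm_lt_pow_add_one x (-((k' : ℤ) + 1))).mpr h1
        have : (-((k' : ℤ) + 1)) = (-(↑(k' + 1) : ℤ)) := by push_cast; ring
        rwa [this] at h2
    · intro hx; exact hx.trans hkle
  · cases k with
    | zero => simp
    | succ k' =>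
      have h1 : t < (p : ℝ) ^ (-(k' : ℤ)) :=
        not_le.mp (hmin k' (Nat.lt_succ_self k'))
      have h2 : (p : ℝ) ^ k' < 1 / t := by
        rw [lt_div_iff₀ ht]
        calc (p:ℝ)^k' * t < (p:ℝ)^k' * (p:ℝ)^(-(k':ℤ)) :=
              mul_lt_mul_of_pos_left h1 (by positivity)
        _ = 1 := by rw [← zpow_natCast (p:ℝ) k', ← zpow_add₀ (ne_of_gt hp0)]; simp
      refine le_trans ?_ (le_max_right _ _)
      rw [pow_succ, mul_comm, div_eq_mul_one_div]
      exact mul_le_mul_of_nonneg_left h2.le hp0.le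

lemma padicBall_measurable [MeasurableSpace ℤ_[p]] [BorelSpace ℤ_[p]] (z : ℤ_[p]) (s : ℝ) :
    MeasurableSet (padicBall p z s) := by
  have : padicBall p z s = Metric.closedBall z s := by
    ext x; simp [padicBall, Metric.mem_closedBall, dist_eq_norm]
  rw [this]; exact measurableSet_closedBall

lemma meas_ball [MeasurableSpace ℤ_[p]] [BorelSpace ℤ_[p]]
    (μ : Measure ℤ_[p]) [μ.IsAddHaarMeasure] [IsProbabilityMeasure μ] (k : ℕ) :
    μ (padicBall p 0 ((p : ℝ) ^ (-(k : ℤ)))) = ((p : ENNReal) ^ k)⁻¹ := by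
  set B : Set ℤ_[p] := padicBall p 0 ((p : ℝ) ^ (-(k : ℤ))) with hB
  have hmeas : MeasurableSet B := padicBall_measurable 0 _
  have hmem : ∀ x : ℤ_[p], x ∈ B ↔ ‖x‖ ≤ (p : ℝ) ^ (-(k : ℤ)) := by
    intro x; simp [hB, padicBall]
  have key : ∀ j : ℕ, μ ((fun x : ℤ_[p] => (-(j : ℤ_[p])) + x) ⁻¹' B) = μ B := fun j =>
    measure_preimage_add μ _ B
  have hcover : (⋃ j ∈ Finset.range (p ^ k),
      ((fun x : ℤ_[p] => (-(j : ℤ_[p])) + x) ⁻¹' B)) = Set.univ := by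
    ext x
    simp only [Set.mem_iUnion, Set.mem_univ, iff_true, Set.mem_preimage, Finset.mem_range]
    refine ⟨x.appr k, x.appr_lt k, ?_⟩
    rw [hmem]
    have hspec := PadicInt.appr_spec k x
    rw [PadicInt.norm_le_pow_iff_mem_span_pow]
    have : (-(x.appr k : ℤ_[p])) + x = x - x.appr k := by ring
    rw [this]
    exact hspec
  have hdisj : (↑(Finset.range (p ^ k)) : Set ℕ).PairwiseDisjoint
      (fun j : ℕ => ((fun x : ℤ_[p] => (-(j : ℤ_[p])) + x) ⁻¹' B)) := by
    intro i hi j hj hij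
    simp only [Finset.coe_range, Set.mem_Iio] at hi hj
    refine Set.disjoint_left.mpr ?_
    intro x hxi hxj
    apply hij
    simp only [Set.mem_preimage, hmem] at hxi hxj
    have hd : ‖((((i : ℤ) - (j : ℤ)) : ℤ) : ℤ_[p])‖ ≤ (p : ℝ) ^ (-(k : ℤ)) := by
      have : ((((i : ℤ) - (j : ℤ)) : ℤ) : ℤ_[p]) = (-(j : ℤ_[p]) + x) - (-(i : ℤ_[p]) + x) := by
        push_cast; ring
      rw [this]
      exact ultra _ _ _ hxj hxi
    have := PadicInt.norm_int_le_pow_iff_dvd.mp hd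
    have hlt_i : (i : ℤ) < (p : ℤ) ^ k := by exact_mod_cast hi
    have hlt_j : (j : ℤ) < (p : ℤ) ^ k := by exact_mod_cast hj
    have : (i : ℤ) = j := Int.eq_of_sub_eq_zero (Int.eq_zero_of_abs_lt_dvd this (by
      rw [abs_sub_lt_iff]; constructor <;> omega))
    exact_mod_cast this
  have hsum := measure_biUnion_finset (μ := μ) hdisj (fun j _ => hmeas.preimage (by fun_prop))
  rw [hcover] at hsum
  simp only [key, Finset.sum_const, Finset.card_range, nsmul_eq_mul] at hsum
  have huniv : μ Set.univ = 1 := measure_univ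
  rw [huniv] at hsum
  have hcast : ((p ^ k : ℕ) : ENNReal) = (p : ENNReal) ^ k := by push_cast; ring
  rw [hcast] at hsum
  have hne : ((p : ENNReal) ^ k) ≠ 0 := by
    have h0 : (p : ENNReal) ≠ 0 := by
      simp [Nat.cast_ne_zero, hp.out.ne_zero]
    exact pow_ne_zero _ h0
  have hnetop : ((p : ENNReal) ^ k) ≠ ⊤ := by
    exact ENNReal.pow_ne_top (ENNReal.natCast_ne_top p)
  have := congrArg (fun z => ((p : ENNReal) ^ k)⁻¹ * z) hsum
  simpa [← mul_assoc, ENNReal.inv_mul_cancel hne hnetop] using this.symm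

lemma row_bounds (m N i : ℕ) (hm : 0 < m) :
    (N : ℚ)/m - 1 ≤ (((Finset.Icc 1 N).filter (· ≡ i [MOD m])).card : ℚ) ∧
    (((Finset.Icc 1 N).filter (· ≡ i [MOD m])).card : ℚ) ≤ (N : ℚ)/m + 1 := by
  have hIcc : Finset.Icc 1 N = Finset.Ioc 0 N := Finset.Icc_add_one_left_eq_Ioc 0 N
  have h := Nat.Ioc_filter_modEq_card 0 N hm i
  rw [← hIcc] at h
  simp only [Nat.cast_zero] at h
  have hm' : (0:ℚ) < m := by exact_mod_cast hm
  set d1 := ⌊((N:ℚ) - i)/m⌋ with hd1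
  set d2 := ⌊((0:ℚ) - i)/m⌋ with hd2
  have f1 : ((d1 : ℚ)) ≤ ((N:ℚ) - i)/m := Int.floor_le _
  have f2 : ((N:ℚ) - i)/m - 1 < d1 := Int.sub_one_lt_floor _
  have g1 : ((d2 : ℚ)) ≤ ((0:ℚ) - i)/m := Int.floor_le _
  have g2 : ((0:ℚ) - i)/m - 1 < d2 := Int.sub_one_lt_floor _
  have hcard : ((((Finset.Icc 1 N).filter (· ≡ i [MOD m])).card : ℚ)) = max ((d1:ℚ) - d2) 0 := by
    exact_mod_cast congrArg (fun z : ℤ => (z : ℚ)) h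
  rw [sub_div] at f1 f2 g1 g2
  rw [zero_div] at g1 g2
  rw [hcard]
  constructor
  · refine le_trans ?_ (le_max_left _ _)
    linarith
  · refine max_le (by linarith) (by positivity)

lemma sum_bounds (m N : ℕ) (hm : 0 < m) :
    (N : ℚ) * ((N : ℚ)/m - 2) ≤
      ((∑ i ∈ Finset.Icc 1 N,
        ((Finset.Icc 1 N).filter (fun j => j ≠ i ∧ j ≡ i [MOD m])).card : ℕ) : ℚ) ∧
    (((∑ i ∈ Finset.Icc 1 N,
        ((Finset.Icc 1 N).filter (fun j => j ≠ i ∧ j ≡ i [MOD m])).card : ℕ) : ℚ)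
      ≤ (N : ℚ) * ((N : ℚ)/m)) := by
  have key : ∀ i ∈ Finset.Icc 1 N,
      (N : ℚ)/m - 2 ≤ (((Finset.Icc 1 N).filter (fun j => j ≠ i ∧ j ≡ i [MOD m])).card : ℚ)
      ∧ (((Finset.Icc 1 N).filter (fun j => j ≠ i ∧ j ≡ i [MOD m])).card : ℚ) ≤ (N : ℚ)/m := by
    intro i hi
    have himem : i ∈ (Finset.Icc 1 N).filter (· ≡ i [MOD m]) :=
      Finset.mem_filter.mpr ⟨hi, Nat.ModEq.refl i⟩
    have herase : (Finset.Icc 1 N).filter (fun j => j ≠ i ∧ j ≡ i [MOD m])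
        = ((Finset.Icc 1 N).filter (· ≡ i [MOD m])).erase i := by
      ext j
      simp only [Finset.mem_filter, Finset.mem_erase]
      tauto
    have hcard : ((Finset.Icc 1 N).filter (fun j => j ≠ i ∧ j ≡ i [MOD m])).card
        = ((Finset.Icc 1 N).filter (· ≡ i [MOD m])).card - 1 := by
      rw [herase, Finset.card_erase_of_mem himem]
    have hpos : 1 ≤ ((Finset.Icc 1 N).filter (· ≡ i [MOD m])).card :=
      Finset.card_pos.mpr ⟨i, himem⟩
    have hcast : (((Finset.Icc 1 N).filter (fun j => j ≠ i ∧ j ≡ i [MOD m])).card : ℚ)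
        = (((Finset.Icc 1 N).filter (· ≡ i [MOD m])).card : ℚ) - 1 := by
      rw [hcard, Nat.cast_sub hpos, Nat.cast_one]
    obtain ⟨hlo, hhi⟩ := row_bounds m N i hm
    constructor <;> rw [hcast] <;> linarith
  have hcardIcc : (Finset.Icc 1 N).card = N := by rw [Nat.card_Icc]; omega
  push_cast
  constructor
  · calc (N : ℚ) * ((N : ℚ)/m - 2) = (Finset.Icc 1 N).card • ((N : ℚ)/m - 2) := by
          rw [hcardIcc]; simp [nsmul_eq_mul]
    _ ≤ ∑ i ∈ Finset.Icc 1 N,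
          (((Finset.Icc 1 N).filter (fun j => j ≠ i ∧ j ≡ i [MOD m])).card : ℚ) :=
        Finset.card_nsmul_le_sum _ _ _ (fun i hi => (key i hi).1)
  · calc ∑ i ∈ Finset.Icc 1 N,
          (((Finset.Icc 1 N).filter (fun j => j ≠ i ∧ j ≡ i [MOD m])).card : ℚ)
        ≤ (Finset.Icc 1 N).card • ((N : ℚ)/m) :=
        Finset.sum_le_card_nsmul _ _ _ (fun i hi => (key i hi).2)
    _ = (N : ℚ) * ((N : ℚ)/m) := by rw [hcardIcc]; simp [nsmul_eq_mul]

lemma norm_eq_modEq (a b : ℤ_[p]) (ha : ‖a‖ = 1) (t : ℝ) (k : ℕ)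
    (hequiv : ∀ x : ℤ_[p], ‖x‖ ≤ t ↔ ‖x‖ ≤ (p : ℝ) ^ (-(k : ℤ))) (i j : ℕ) :
    (‖((i : ℤ_[p]) * a + b) - ((j : ℤ_[p]) * a + b)‖ ≤ t ↔ j ≡ i [MOD p ^ k]) := by
  have h1 : ((i : ℤ_[p]) * a + b) - ((j : ℤ_[p]) * a + b)
      = ((((i : ℤ) - (j : ℤ)) : ℤ) : ℤ_[p]) * a := by push_cast; ring
  rw [h1, norm_mul, ha, mul_one, hequiv,
    PadicInt.norm_int_le_pow_iff_dvd]
  rw [Nat.modEq_iff_dvd]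
  norm_cast

lemma pairCount_sum (a b : ℤ_[p]) (ha : ‖a‖ = 1) (t : ℝ) (k : ℕ)
    (hequiv : ∀ x : ℤ_[p], ‖x‖ ≤ t ↔ ‖x‖ ≤ (p : ℝ) ^ (-(k : ℤ))) (N : ℕ) :
    pairCount p (fun n => (n : ℤ_[p]) * a + b) N t
      = ∑ i ∈ Finset.Icc 1 N,
          ((Finset.Icc 1 N).filter (fun j => j ≠ i ∧ j ≡ i [MOD p ^ k])).card := by
  rw [pairCount]
  rw [Finset.card_eq_sum_card_fiberwise (f := Prod.fst) (t := Finset.Icc 1 N)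
    (fun ij hij => (Finset.mem_product.mp (Finset.mem_filter.mp hij).1).1)]
  refine Finset.sum_congr rfl fun i hi => ?_
  refine Finset.card_bij (fun ij _ => ij.2) ?_ ?_ ?_
  · intro ij hij
    simp only [Finset.mem_filter, Finset.mem_product] at hij
    obtain ⟨⟨⟨hmem, hmem2⟩, hne, hnorm⟩, hfst⟩ := hij
    subst hfst
    simp only [Finset.mem_filter]
    exact ⟨hmem2, fun h => hne h.symm,
      (norm_eq_modEq a b ha t k hequiv ij.1 ij.2).mp hnorm⟩
  · intro ij hij ij' hij' hsnd
    simp only [Finset.mem_filter] at hij hij'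
    exact Prod.ext (hij.2.trans hij'.2.symm) hsnd
  · intro j hj
    simp only [Finset.mem_filter] at hj
    obtain ⟨hjmem, hne, hmod⟩ := hj
    refine ⟨(i, j), ?_, rfl⟩
    simp only [Finset.mem_filter, Finset.mem_product]
    exact ⟨⟨⟨hi, hjmem⟩, fun h => hne h.symm,
      (norm_eq_modEq a b ha t k hequiv i j).mpr hmod⟩, trivial⟩


lemma pairF_est [MeasurableSpace ℤ_[p]] [BorelSpace ℤ_[p]]
    (μ : Measure ℤ_[p]) [μ.IsAddHaarMeasure] [IsProbabilityMeasure μ]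
    (a b : ℤ_[p]) (ha : ‖a‖ = 1) (N : ℕ) (hN : 1 ≤ N) (t : ℝ) (ht : 0 < t) :
    |(1 / (N : ℝ) ^ 2) * (1 / (μ (padicBall p 0 t)).toReal) *
        (pairCount p (fun n => (n : ℤ_[p]) * a + b) N t : ℝ) - 1|
      ≤ 2 * max 1 ((p : ℝ) / t) / N := by
  obtain ⟨k, hequiv, hbound⟩ := exists_k (p := p) t ht
  have hball : padicBall p 0 t = padicBall p 0 ((p : ℝ) ^ (-(k : ℤ))) := by
    ext x
    simp only [padicBall, Set.mem_setOf_eq, sub_zero]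
    exact hequiv x
  rw [hball, meas_ball μ k]
  have htoReal : (((p : ENNReal) ^ k)⁻¹).toReal = ((p : ℝ) ^ k)⁻¹ := by
    rw [ENNReal.toReal_inv]
    norm_cast
  rw [htoReal, show (1:ℝ) / (((p:ℝ) ^ k)⁻¹) = (p:ℝ) ^ k by simp,
    pairCount_sum a b ha t k hequiv N]
  set m := p ^ k with hmdef
  set P : ℕ := ∑ i ∈ Finset.Icc 1 N,
      ((Finset.Icc 1 N).filter (fun j => j ≠ i ∧ j ≡ i [MOD m])).card with hPdef
  have hm : 0 < m := pow_pos hp.out.pos k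
  have hmR : (p : ℝ) ^ k = (m : ℝ) := by rw [hmdef]; push_cast; ring
  rw [hmR]
  obtain ⟨hlo, hhi⟩ := sum_bounds m N hm
  have hloR : (N : ℝ) * ((N : ℝ)/(m : ℝ) - 2) ≤ (P : ℝ) := by
    have := (Rat.cast_le (K := ℝ)).mpr hlo
    push_cast at this
    rw [hPdef]
    push_cast
    exact this
  have hhiR : (P : ℝ) ≤ (N : ℝ) * ((N : ℝ)/(m : ℝ)) := by
    have := (Rat.cast_le (K := ℝ)).mpr hhi
    push_cast at this
    rw [hPdef]
    push_cast
    exact this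
  have hNR : (0 : ℝ) < N := by exact_mod_cast hN
  have hmRpos : (0 : ℝ) < m := by exact_mod_cast hm
  have hmax : (m : ℝ) ≤ max 1 ((p : ℝ) / t) := hmR ▸ hbound
  have e2 : (m : ℝ) * ((N : ℝ) * ((N : ℝ)/(m : ℝ))) = (N : ℝ) ^ 2 := by
    field_simp
  have e3 : (m : ℝ) * ((N : ℝ) * ((N : ℝ)/(m : ℝ) - 2)) = (N : ℝ) ^ 2 - 2 * N * m := by
    field_simp
  have h1 : (m : ℝ) * P ≤ (N : ℝ) ^ 2 := by
    calc (m : ℝ) * P ≤ (m : ℝ) * ((N : ℝ) * ((N : ℝ)/(m : ℝ))) :=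
          mul_le_mul_of_nonneg_left hhiR hmRpos.le
    _ = (N : ℝ) ^ 2 := e2
  have h2 : (N : ℝ) ^ 2 - 2 * N * m ≤ (m : ℝ) * P := by
    calc (N : ℝ) ^ 2 - 2 * N * m = (m : ℝ) * ((N : ℝ) * ((N : ℝ)/(m : ℝ) - 2)) := e3.symm
    _ ≤ (m : ℝ) * P := mul_le_mul_of_nonneg_left hloR hmRpos.le
  have hN2 : (0 : ℝ) < (N : ℝ) ^ 2 := by positivity
  have hexpr : 1 / (N : ℝ) ^ 2 * (m : ℝ) * (P : ℝ) = ((m : ℝ) * P) / (N : ℝ) ^ 2 := by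
    ring
  rw [hexpr, abs_le]
  have hmaxpos : (0 : ℝ) < max 1 ((p : ℝ) / t) := lt_of_lt_of_le one_pos (le_max_left _ _)
  constructor
  · have key : 1 - 2 * (m : ℝ) / N ≤ ((m : ℝ) * P) / (N : ℝ) ^ 2 := by
      rw [le_div_iff₀ hN2]
      have : (1 - 2 * (m : ℝ) / N) * (N : ℝ) ^ 2 = (N : ℝ) ^ 2 - 2 * N * m := by
        field_simp
      rw [this]
      exact h2
    have key2 : 2 * (m : ℝ) / N ≤ 2 * max 1 ((p : ℝ) / t) / N := by
      gcongr
    linarith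
  · have key : ((m : ℝ) * P) / (N : ℝ) ^ 2 ≤ 1 := by
      rw [div_le_one hN2]
      exact h1
    have : (0 : ℝ) ≤ 2 * max 1 ((p : ℝ) / t) / N := by positivity
    linarith

end KroneckerPPC

/-- Theorem: for `a` a unit in `ℤ_p` and `b ∈ ℤ_p`, the sequence `(n·a + b)` has
weak Poissonian pair correlations for every `0 ≤ α < 1`. -/
theorem kronecker_hasWeakPPC
    (p : ℕ) [Fact p.Prime] [MeasurableSpace ℤ_[p]] [BorelSpace ℤ_[p]]
    (μ : Measure ℤ_[p]) [μ.IsAddHaarMeasure] [IsProbabilityMeasure μ]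
    (a b : ℤ_[p]) (ha : ‖a‖ = 1)
    (α : ℝ) (hα0 : 0 ≤ α) (hα1 : α < 1) :
    HasWeakPPC p μ (fun n => (n : ℤ_[p]) * a + b) α := by
  intro s hs
  have hp' : Fact p.Prime := inferInstance
  have hppos : (0 : ℝ) < p := by exact_mod_cast hp'.out.pos
  have key : ∀ N : ℕ, 1 ≤ N →
      |pairF p μ (fun n => (n : ℤ_[p]) * a + b) α N s - 1|
        ≤ 2 * max 1 ((p : ℝ) * (N : ℝ) ^ α / s) / N := by
    intro N hN
    have hN0 : (0 : ℝ) < N := by exact_mod_cast hN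
    have hNα : (0 : ℝ) < (N : ℝ) ^ α := Real.rpow_pos_of_pos hN0 α
    have ht : 0 < s / (N : ℝ) ^ α := div_pos hs hNα
    have hdiv : (p : ℝ) / (s / (N : ℝ) ^ α) = (p : ℝ) * (N : ℝ) ^ α / s := div_div_eq_mul_div _ _ _
    have := KroneckerPPC.pairF_est μ a b ha N hN (s / (N : ℝ) ^ α) ht
    rw [hdiv] at this
    exact this
  have hEbound : ∀ N : ℕ, 1 ≤ N →
      2 * max 1 ((p : ℝ) * (N : ℝ) ^ α / s) / N
        ≤ 2 / (N : ℝ) + (2 * p / s) * (N : ℝ) ^ (α - 1) := by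
    intro N hN
    have hN0 : (0 : ℝ) < N := by exact_mod_cast hN
    have hNα : (0 : ℝ) < (N : ℝ) ^ α := Real.rpow_pos_of_pos hN0 α
    have hpow : (N : ℝ) ^ (α - 1) = (N : ℝ) ^ α / N := by
      rw [Real.rpow_sub hN0, Real.rpow_one]
    have hmax : max 1 ((p : ℝ) * (N : ℝ) ^ α / s) ≤ 1 + (p : ℝ) * (N : ℝ) ^ α / s := by
      have hx : (0 : ℝ) ≤ (p : ℝ) * (N : ℝ) ^ α / s := by positivity
      exact max_le (by linarith) (by linarith)
    calc 2 * max 1 ((p : ℝ) * (N : ℝ) ^ α / s) / N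
        ≤ 2 * (1 + (p : ℝ) * (N : ℝ) ^ α / s) / N := by
          gcongr
    _ = 2 / (N : ℝ) + (2 * p / s) * (N : ℝ) ^ (α - 1) := by
          rw [hpow]
          field_simp
  have hG : Tendsto (fun N : ℕ => 2 / (N : ℝ) + (2 * p / s) * (N : ℝ) ^ (α - 1))
      atTop (nhds 0) := by
    have h1 : Tendsto (fun N : ℕ => 2 / (N : ℝ)) atTop (nhds 0) :=
      tendsto_const_div_atTop_nhds_zero_nat 2
    have h2 : Tendsto (fun N : ℕ => (N : ℝ) ^ (α - 1)) atTop (nhds 0) := by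
      have hneg : α - 1 = -(1 - α) := by ring
      rw [hneg]
      exact (tendsto_rpow_neg_atTop (by linarith)).comp tendsto_natCast_atTop_atTop
    have := h1.add (h2.const_mul (2 * (p : ℝ) / s))
    simpa using this
  have hE : Tendsto (fun N : ℕ => 2 * max 1 ((p : ℝ) * (N : ℝ) ^ α / s) / N)
      atTop (nhds 0) := by
    apply squeeze_zero' ?_ ?_ hG
    · filter_upwards [eventually_ge_atTop 1] with N hN
      have hN0 : (0 : ℝ) < N := by exact_mod_cast hN
      positivity
    · filter_upwards [eventually_ge_atTop 1] with N hN
      exact hEbound N hN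
  have hsub : Tendsto (fun N : ℕ => pairF p μ (fun n => (n : ℤ_[p]) * a + b) α N s - 1)
      atTop (nhds 0) := by
    apply squeeze_zero_norm' ?_ hE
    filter_upwards [eventually_ge_atTop 1] with N hN
    rw [Real.norm_eq_abs]
    exact key N hN
  have := hsub.add (tendsto_const_nhds (x := (1 : ℝ)))
  simpa using this
end

section
/- Let p be a prime, a ∈ ℤ_p with |a|_p = 1, and b ∈ ℤ_p arbitrary. Then the sequence (n·a + b)_{n∈ℕ} does not have Poissonian pair correlations, i.e. it does not have weak Poissonian pair correlations for α = 1; in fact, for every s with 0 < s < 1 and every N ∈ ℕ one has F_{N,1,p}(s) = 0. -/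
open MeasureTheory Filter
open scoped Classical

lemma one_div_le_norm_nat (p : ℕ) [hp : Fact p.Prime] (m : ℕ) (hm : 0 < m) :
    1 / (m : ℝ) ≤ ‖((m : ℤ) : ℤ_[p])‖ := by
  by_contra h
  push_neg at h
  set n := Nat.log p m with hn
  have hpm : m < p ^ (n + 1) := Nat.lt_pow_succ_log_self hp.out.one_lt m
  have hmn : (p : ℕ) ^ n ≤ m := Nat.pow_log_le_self p hm.ne'
  have h1 : (1 : ℝ) / m ≤ (p : ℝ) ^ (-(n : ℤ)) := by
    rw [zpow_neg, zpow_natCast, ← one_div]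
    have hp0 : (0 : ℝ) < (p : ℝ) ^ n := by
      have : (0:ℝ) < p := by exact_mod_cast hp.out.pos
      positivity
    exact one_div_le_one_div_of_le hp0 (by exact_mod_cast hmn)
  have h2 : ‖((m : ℤ) : ℤ_[p])‖ < (p : ℝ) ^ (-((n : ℤ) + 1) + 1) := by
    rw [show (-((n : ℤ) + 1) + 1) = -(n : ℤ) by ring]
    exact lt_of_lt_of_le h h1
  have h3 : ‖((m : ℤ) : ℤ_[p])‖ ≤ (p : ℝ) ^ (-((n + 1 : ℕ) : ℤ)) := by
    have := (PadicInt.norm_lt_pow_iff_norm_le_pow_sub_one _ (-((n : ℤ) + 1) + 1)).mp h2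
    convert this using 2
    push_cast
    ring
  have h4 : ((p : ℤ) ^ (n + 1)) ∣ (m : ℤ) := PadicInt.norm_int_le_pow_iff_dvd.mp h3
  have h5 : p ^ (n + 1) ∣ m := by exact_mod_cast h4
  exact absurd (Nat.le_of_dvd hm h5) (not_le.mpr hpm)


/-- Theorem: for `a` a unit in `ℤ_p` and `b ∈ ℤ_p`, the sequence `(n·a + b)` does
not have Poissonian pair correlations (i.e. weak PPC for `α = 1`); in fact
`F_{N,1,p}(s) = 0` for all `0 < s < 1` and all `N`. -/
theorem kronecker_not_hasPPC
    (p : ℕ) [Fact p.Prime] [MeasurableSpace ℤ_[p]] [BorelSpace ℤ_[p]]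
    (μ : Measure ℤ_[p]) [μ.IsAddHaarMeasure] [IsProbabilityMeasure μ]
    (a b : ℤ_[p]) (ha : ‖a‖ = 1) :
    (∀ s : ℝ, 0 < s → s < 1 → ∀ N : ℕ, 1 ≤ N →
        pairF p μ (fun n => (n : ℤ_[p]) * a + b) 1 N s = 0) ∧
      ¬ HasWeakPPC p μ (fun n => (n : ℤ_[p]) * a + b) 1 := by
  have key : ∀ s : ℝ, 0 < s → s < 1 → ∀ N : ℕ, 1 ≤ N →
      pairF p μ (fun n => (n : ℤ_[p]) * a + b) 1 N s = 0 := by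
    intro s hs hs1 N hN
    have hcount : pairCount p (fun n => (n : ℤ_[p]) * a + b) N (s / (N : ℝ) ^ (1 : ℝ)) = 0 := by
      rw [pairCount, Finset.card_eq_zero, Finset.filter_eq_empty_iff]
      rintro ⟨i, j⟩ hij
      simp only [Finset.mem_product, Finset.mem_Icc] at hij
      rintro ⟨hne, hle⟩
      have hsub : ((i : ℤ_[p]) * a + b) - ((j : ℤ_[p]) * a + b)
          = (((i : ℤ) - (j : ℤ) : ℤ) : ℤ_[p]) * a := by push_cast; ring
      set k : ℤ := (i : ℤ) - (j : ℤ) with hk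
      have hk0 : k ≠ 0 := sub_ne_zero.mpr (by exact_mod_cast hne)
      have hnorm : ‖((i : ℤ_[p]) * a + b) - ((j : ℤ_[p]) * a + b)‖ = ‖(k : ℤ_[p])‖ := by
        rw [hsub, norm_mul, ha, mul_one]
      have hnat : ‖(k : ℤ_[p])‖ = ‖(((k.natAbs : ℤ)) : ℤ_[p])‖ := by
        rcases Int.natAbs_eq k with h | h
        · rw [← h]
        · have h' : (k : ℤ_[p]) = -((k.natAbs : ℤ) : ℤ_[p]) := by
            exact_mod_cast congrArg (fun t : ℤ => (t : ℤ_[p])) h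
          rw [h', norm_neg]
      have hmpos : 0 < k.natAbs := Int.natAbs_pos.mpr hk0
      have hmle : k.natAbs ≤ N := by
        have h1 : (i : ℤ) ≤ N := by exact_mod_cast hij.1.2
        have h2 : (j : ℤ) ≤ N := by exact_mod_cast hij.2.2
        have h3 : (1 : ℤ) ≤ i := by exact_mod_cast hij.1.1
        have h4 : (1 : ℤ) ≤ j := by exact_mod_cast hij.2.1
        omega
      have hge : 1 / (N : ℝ) ≤ ‖(k : ℤ_[p])‖ := by
        rw [hnat]
        refine le_trans ?_ (one_div_le_norm_nat p k.natAbs hmpos)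
        apply one_div_le_one_div_of_le (by exact_mod_cast hmpos)
        exact_mod_cast hmle
      have hNpos : (0 : ℝ) < N := by exact_mod_cast hN
      have hlt : s / (N : ℝ) ^ (1 : ℝ) < 1 / N := by
        rw [Real.rpow_one]
        exact (div_lt_div_iff_of_pos_right hNpos).mpr hs1
      have := lt_of_le_of_lt hle hlt
      rw [hnorm] at this
      exact absurd hge (not_le.mpr this)
    rw [pairF, hcount]
    simp
  refine ⟨key, fun h => ?_⟩
  have h1 := h (1/2) (by norm_num)
  have h0 : Tendsto (fun N : ℕ => pairF p μ (fun n => (n : ℤ_[p]) * a + b) 1 N (1/2))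
      atTop (nhds 0) := by
    apply Tendsto.congr' _ tendsto_const_nhds
    filter_upwards [eventually_ge_atTop 1] with N hN
    exact (key (1/2) (by norm_num) (by norm_num) N hN).symm
  exact one_ne_zero (tendsto_nhds_unique h1 h0)
end

section
/- Let p be a prime, 0 < α ≤ 1, and (x_n)_{n∈ℕ} ⊂ ℤ_p. Suppose there exists a function F: ℕ × ℕ → ℝ which is monotonically increasing in its first argument and satisfies, for all N and all K ≤ N/2, max_{s=1,…,K} | (N^{−α}/μ(D_p(0, s/N^α)))·#{1 ≤ l ≠ m ≤ N : |x_l − x_m|_p < s/N^α} − N^{2−α} | < F(K,N). Then there exists an integer N₀ > 0 such that for all N ≥ N₀ and all K with (1/2)·N^{(2/5)α} ≤ K ≤ N^{(2/5)α}, one has N·D_N(x_n) ≤ 5·max( N^{1−(1/5)α}, √(N^α · F(K², N)) ). -/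
open MeasureTheory Filter
open scoped Classical

/-- `#{1 ≤ l ≠ m ≤ N : |x_l - x_m|_p < t}` (strict inequality). -/
noncomputable def pairCountLt (p : ℕ) [Fact p.Prime] (x : ℕ → ℤ_[p]) (N : ℕ) (t : ℝ) : ℕ :=
  ((Finset.Icc 1 N ×ˢ Finset.Icc 1 N).filter
    fun ij => ij.1 ≠ ij.2 ∧ ‖x ij.1 - x ij.2‖ < t).card

/-!
Reducing modulo `p ^ k` turns the balls of radius `p ^ (-k)` into residue classes, and the
pair count at a radius strictly between `p ^ (-k)` and `p ^ (-k+1)` into `∑ₐ c_k(a)² - N`,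
where `c_k(a)` counts the points in the class `a`. The pair-correlation bound therefore
controls the variance `∑ₐ (c_k(a) - N p^(-k))² ≤ N + N^α F p^(-k)` at every level `k` reached
by a radius `s / N^α` with `s ≤ K²`, i.e. for `2 N^α / K² ≤ p^k ≤ N^α / 2`. A single class at
such a level deviates by at most the square root of this variance; a coarser class is a union
of classes of the coarsest controlled level (Cauchy–Schwarz), and a finer class lies inside a
class of the finest controlled level, which already holds few points.
-/

open Finset
open scoped ENNReal

theorem Finset.sum_sq_card_fiberwise_eq_card_filter {α β : Type*} [DecidableEq β] [Fintype β]
    (s : Finset α) (f : α → β) :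
    ∑ b, #{i ∈ s | f i = b} ^ 2 = #{ij ∈ s ×ˢ s | f ij.1 = f ij.2} := by
  rw [card_eq_sum_card_fiberwise (f := fun ij => f ij.1) (t := univ)
    fun _ _ => mem_coe.2 (mem_univ _)]
  refine sum_congr rfl fun b _ => ?_
  rw [sq, ← card_product, filter_filter, ← filter_product]
  congr 1
  refine filter_congr fun ij _ => ?_
  constructor
  · rintro ⟨h₁, h₂⟩; exact ⟨h₁.trans h₂.symm, h₁⟩
  · rintro ⟨h, rfl⟩; exact ⟨rfl, h.symm⟩

theorem ZMod.mul_card_filter_castHom_eq {m n : ℕ} [NeZero n] (h : m ∣ n) (a : ZMod m) :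
    m * #{b : ZMod n | castHom h (ZMod m) b = a} = n := by
  have : NeZero m := ⟨fun hm => NeZero.ne n (Nat.eq_zero_of_zero_dvd (hm ▸ h))⟩
  have hfib (a' : ZMod m) : #{b : ZMod n | castHom h (ZMod m) b = a'} =
      #{b : ZMod n | castHom h (ZMod m) b = a} :=
    AddMonoidHom.card_fiber_eq_of_mem_range (castHom h (ZMod m)).toAddMonoidHom
      (castHom_surjective h a') (castHom_surjective h a)
  have := card_eq_sum_card_fiberwise (s := (univ : Finset (ZMod n))) (t := univ)
    (f := castHom h (ZMod m)) fun _ _ => mem_coe.2 (mem_univ _)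
  simp only [card_univ, ZMod.card, hfib, sum_const, smul_eq_mul] at this
  exact this.symm

theorem Real.sqrt_add_le_sqrt_add_sqrt {a b : ℝ} (ha : 0 ≤ a) (hb : 0 ≤ b) :
    √(a + b) ≤ √a + √b :=
  Real.sqrt_le_iff.2 ⟨by positivity, by
    nlinarith [Real.sq_sqrt ha, Real.sq_sqrt hb, Real.sqrt_nonneg a, Real.sqrt_nonneg b]⟩

theorem exists_nat_div_mem_Ioo {A m q : ℝ} {L : ℕ} (hA : 0 < A) (hAm : 1 < A * m) (hq : 2 ≤ q)
    (hL : 2 * (A * m) ≤ L) : ∃ s : ℕ, 1 ≤ s ∧ s ≤ L ∧ m < s / A ∧ s / A < q * m := by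
  have hm : 0 < m := pos_of_mul_pos_right (by linarith) hA.le
  have hlt : A * m < ⌊A * m⌋₊ + 1 := Nat.lt_floor_add_one _
  have hle : (⌊A * m⌋₊ : ℝ) ≤ A * m := Nat.floor_le (by positivity)
  refine ⟨⌊A * m⌋₊ + 1, by omega, ?_, ?_, ?_⟩
  · exact_mod_cast (show ((⌊A * m⌋₊ + 1 : ℕ) : ℝ) ≤ L by push_cast; linarith)
  · rw [lt_div_iff₀ hA]; push_cast; linarith
  · rw [div_lt_iff₀ hA]; push_cast; nlinarith

theorem exists_pow_scales {q A L : ℝ} (hq : 1 < q) (hA : 2 ≤ A) (hL : 0 < L) (hLA : L ≤ 2 * A)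
    (hqL : 4 * q ≤ L) :
    ∃ k₀ k₁ : ℕ, k₀ ≤ k₁ ∧ 2 * A ≤ L * q ^ k₀ ∧ L * q ^ k₀ ≤ 2 * q * A ∧
      2 * q ^ k₁ ≤ A ∧ A < 2 * q ^ (k₁ + 1) := by
  obtain ⟨n, hn₁, hn₂⟩ := exists_nat_pow_near (x := 2 * A / L) ((one_le_div hL).2 hLA) hq
  obtain ⟨k₁, hk₁, hk₂⟩ := exists_nat_pow_near (x := A / 2) (by linarith) hq
  rw [le_div_iff₀ hL] at hn₁
  rw [div_lt_iff₀ hL] at hn₂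
  refine ⟨n + 1, k₁, ?_, by linarith, ?_, by linarith, by linarith⟩
  · refine Nat.lt_succ_iff.1 ((pow_lt_pow_iff_right₀ hq).1 (lt_of_le_of_lt ?_ hk₂))
    rw [pow_succ]
    nlinarith
  · rw [pow_succ]
    nlinarith

namespace PadicInt

variable {p : ℕ} [Fact p.Prime]

theorem norm_le_zpow_neg_iff_toZModPow_eq_zero (k : ℕ) (y : ℤ_[p]) :
    ‖y‖ ≤ (p : ℝ) ^ (-(k : ℤ)) ↔ toZModPow k y = 0 := by
  rw [norm_le_pow_iff_mem_span_pow, ← ker_toZModPow, RingHom.mem_ker]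

theorem norm_le_iff_toZModPow_eq_zero {k : ℕ} {t : ℝ} (h₁ : (p : ℝ) ^ (-(k : ℤ)) ≤ t)
    (h₂ : t < (p : ℝ) ^ (-(k : ℤ) + 1)) (y : ℤ_[p]) : ‖y‖ ≤ t ↔ toZModPow k y = 0 := by
  rw [← norm_le_zpow_neg_iff_toZModPow_eq_zero]
  refine ⟨fun h => ?_, fun h => h.trans h₁⟩
  rw [norm_le_pow_iff_norm_lt_pow_add_one]
  exact h.trans_lt h₂

theorem norm_lt_iff_toZModPow_eq_zero {k : ℕ} {t : ℝ} (h₁ : (p : ℝ) ^ (-(k : ℤ)) < t)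
    (h₂ : t ≤ (p : ℝ) ^ (-(k : ℤ) + 1)) (y : ℤ_[p]) : ‖y‖ < t ↔ toZModPow k y = 0 := by
  rw [← norm_le_zpow_neg_iff_toZModPow_eq_zero]
  refine ⟨fun h => ?_, fun h => h.trans_lt h₁⟩
  rw [norm_le_pow_iff_norm_lt_pow_add_one]
  exact h.trans_le h₂

theorem measure_ker_toZModPow [MeasurableSpace ℤ_[p]] [BorelSpace ℤ_[p]]
    (μ : Measure ℤ_[p]) [μ.IsAddLeftInvariant] [IsProbabilityMeasure μ] (k : ℕ) :
    μ {y | toZModPow k y = 0} = ((p : ℝ≥0∞) ^ k)⁻¹ := by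
  have : NeZero (p ^ k) := ⟨pow_ne_zero _ (Fact.out : p.Prime).ne_zero⟩
  let H := (toZModPow (p := p) k).toAddMonoidHom.ker
  have hH : (H : Set ℤ_[p]) = {y | toZModPow k y = 0} := rfl
  have hmeas : MeasurableSet (H : Set ℤ_[p]) := by
    have : (H : Set ℤ_[p]) = {y | ‖y‖ ≤ (p : ℝ) ^ (-(k : ℤ))} := by
      ext y; exact (norm_le_zpow_neg_iff_toZModPow_eq_zero k y).symm
    rw [this]
    exact (isClosed_le continuous_norm continuous_const).measurableSet
  have hindex : H.index = p ^ k := by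
    rw [AddSubgroup.index_ker, AddMonoidHom.range_eq_top.2 (ZMod.ringHom_surjective _)]
    simp
  have := AddSubgroup.index_mul_measure H hmeas μ
  rw [hindex, measure_univ, hH] at this
  exact ENNReal.eq_inv_of_mul_eq_one_left (by rw [mul_comm]; exact_mod_cast this)

end PadicInt

section ResidueCount

variable {p : ℕ} [Fact p.Prime] (x : ℕ → ℤ_[p]) (N : ℕ)

noncomputable def residueCount (k : ℕ) (a : ZMod (p ^ k)) : ℕ :=
  #{n ∈ Icc 1 N | PadicInt.toZModPow k (x n) = a}

theorem sum_residueCount (k : ℕ) : ∑ a, residueCount x N k a = N := by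
  simp only [residueCount]
  rw [← card_eq_sum_card_fiberwise fun _ _ => mem_coe.2 (mem_univ _), Nat.card_Icc,
    Nat.add_sub_cancel]

theorem residueCount_eq_sum_residueCount {k k' : ℕ} (h : k ≤ k') (a : ZMod (p ^ k)) :
    residueCount x N k a = ∑ b ∈ {b : ZMod (p ^ k') | ZMod.castHom (pow_dvd_pow p h) _ b = a},
      residueCount x N k' b := by
  simp only [residueCount]
  rw [sum_card_fiberwise_eq_card_filter]
  congr 1
  refine filter_congr fun n _ => ?_
  rw [mem_filter, ← PadicInt.cast_toZModPow k k' h]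
  simp

theorem residueCount_toZModPow_anti {k k' : ℕ} (h : k ≤ k') (z : ℤ_[p]) :
    residueCount x N k' (PadicInt.toZModPow k' z) ≤
      residueCount x N k (PadicInt.toZModPow k z) := by
  refine card_le_card fun n => ?_
  simp only [mem_filter]
  rintro ⟨hn, hz⟩
  refine ⟨hn, ?_⟩
  rw [← PadicInt.cast_toZModPow k k' h, hz, PadicInt.cast_toZModPow k k' h]

theorem card_filter_mem_padicBall (z : ℤ_[p]) (k : ℕ) :
    #{n ∈ Icc 1 N | x n ∈ padicBall p z ((p : ℝ) ^ (-(k : ℤ)))} =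
      residueCount x N k (PadicInt.toZModPow k z) := by
  refine congrArg card (filter_congr fun n _ => ?_)
  rw [padicBall, Set.mem_ofPred_eq, PadicInt.norm_le_zpow_neg_iff_toZModPow_eq_zero, map_sub,
    sub_eq_zero]

theorem pairCountLt_add_eq_sum_sq {k : ℕ} {t : ℝ} (h₁ : (p : ℝ) ^ (-(k : ℤ)) < t)
    (h₂ : t ≤ (p : ℝ) ^ (-(k : ℤ) + 1)) :
    pairCountLt p x N t + N = ∑ a, residueCount x N k a ^ 2 := by
  set r := fun n => PadicInt.toZModPow k (x n)
  have hoff : pairCountLt p x N t = #{ij ∈ Icc 1 N ×ˢ Icc 1 N | r ij.1 = r ij.2 ∧ ij.1 ≠ ij.2} :=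
    congrArg card <| filter_congr fun ij _ => by
      rw [PadicInt.norm_lt_iff_toZModPow_eq_zero h₁ h₂, map_sub, sub_eq_zero, and_comm]
  have hdiag : #{ij ∈ Icc 1 N ×ˢ Icc 1 N | r ij.1 = r ij.2 ∧ ¬ij.1 ≠ ij.2} = N := by
    calc _ = #(Icc 1 N).diag := by
          rw [diag_eq_filter]
          exact congrArg card <| filter_congr fun ij _ =>
            ⟨fun h => not_not.1 h.2, fun h => ⟨congrArg r h, not_not.2 h⟩⟩
      _ = N := by rw [diag_card, Nat.card_Icc, Nat.add_sub_cancel]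
  calc pairCountLt p x N t + N
      = #{ij ∈ Icc 1 N ×ˢ Icc 1 N | r ij.1 = r ij.2 ∧ ij.1 ≠ ij.2} +
          #{ij ∈ Icc 1 N ×ˢ Icc 1 N | r ij.1 = r ij.2 ∧ ¬ij.1 ≠ ij.2} := by rw [hoff, hdiag]
    _ = #{ij ∈ Icc 1 N ×ˢ Icc 1 N | r ij.1 = r ij.2} := by
      rw [← filter_filter, ← filter_filter, card_filter_add_card_filter_not]
    _ = ∑ a, residueCount x N k a ^ 2 := (sum_sq_card_fiberwise_eq_card_filter _ r).symm

theorem toReal_measure_padicBall_zero [MeasurableSpace ℤ_[p]] [BorelSpace ℤ_[p]]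
    (μ : Measure ℤ_[p]) [μ.IsAddLeftInvariant] [IsProbabilityMeasure μ] {k : ℕ} {t : ℝ}
    (h₁ : (p : ℝ) ^ (-(k : ℤ)) ≤ t) (h₂ : t < (p : ℝ) ^ (-(k : ℤ) + 1)) :
    (μ (padicBall p 0 t)).toReal = (p : ℝ) ^ (-(k : ℤ)) := by
  have : padicBall p 0 t = {y | PadicInt.toZModPow k y = 0} := by
    ext y
    rw [padicBall, Set.mem_ofPred_eq, sub_zero, PadicInt.norm_le_iff_toZModPow_eq_zero h₁ h₂]
    rfl
  rw [this, PadicInt.measure_ker_toZModPow, ENNReal.toReal_inv, zpow_neg, zpow_natCast]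
  simp

theorem sum_sq_residueCount_sub_le [MeasurableSpace ℤ_[p]] [BorelSpace ℤ_[p]]
    (μ : Measure ℤ_[p]) [μ.IsAddLeftInvariant] [IsProbabilityMeasure μ] {k : ℕ} {A F₀ t : ℝ}
    (hA : 0 < A) (h₁ : (p : ℝ) ^ (-(k : ℤ)) < t) (h₂ : t < (p : ℝ) ^ (-(k : ℤ) + 1))
    (hF : |(A⁻¹ / (μ (padicBall p 0 t)).toReal) * (pairCountLt p x N t : ℝ) - (N : ℝ) ^ 2 / A|
      ≤ F₀) :
    ∑ a, ((residueCount x N k a : ℝ) - N * (p : ℝ) ^ (-(k : ℤ))) ^ 2 ≤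
      N + A * F₀ * (p : ℝ) ^ (-(k : ℤ)) := by
  have : NeZero (p ^ k) := ⟨pow_ne_zero _ (Fact.out : p.Prime).ne_zero⟩
  have hp : (0 : ℝ) < p := by exact_mod_cast (Fact.out : p.Prime).pos
  set m := (p : ℝ) ^ (-(k : ℤ)) with hm_def
  have hm : 0 < m := zpow_pos hp _
  have hcard : (Fintype.card (ZMod (p ^ k)) : ℝ) * m = 1 := by
    rw [ZMod.card, Nat.cast_pow, hm_def, zpow_neg, zpow_natCast, mul_inv_cancel₀ (by positivity)]
  have hsum : ∑ a, (residueCount x N k a : ℝ) = N := by exact_mod_cast sum_residueCount x N k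
  have hpair : (pairCountLt p x N t : ℝ) = ∑ a, (residueCount x N k a : ℝ) ^ 2 - N := by
    rw [eq_sub_iff_add_eq]; exact_mod_cast pairCountLt_add_eq_sum_sq x N h₁ h₂.le
  have hvar : ∑ a, ((residueCount x N k a : ℝ) - N * m) ^ 2 =
      ∑ a, (residueCount x N k a : ℝ) ^ 2 - N ^ 2 * m := by
    simp only [sub_sq, sum_add_distrib, sum_sub_distrib, ← sum_mul, ← mul_sum, hsum, sum_const,
      card_univ, nsmul_eq_mul]
    linear_combination (N : ℝ) ^ 2 * m * hcard
  rw [toReal_measure_padicBall_zero μ h₁.le h₂, hpair] at hF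
  have hupper := sub_le_iff_le_add.1 ((le_abs_self _).trans hF)
  have hscaled : ∑ a, (residueCount x N k a : ℝ) ^ 2 - N ≤ A * m * (F₀ + N ^ 2 / A) :=
    calc _ = A * m * (A⁻¹ / m * (∑ a, (residueCount x N k a : ℝ) ^ 2 - N)) := by
          field_simp
      _ ≤ A * m * (F₀ + N ^ 2 / A) := by gcongr
  have hexpand : A * m * (F₀ + N ^ 2 / A) = A * F₀ * m + N ^ 2 * m := by
    field_simp
  rw [hvar]
  linarith

theorem abs_residueCount_sub_le_sqrt {k k' : ℕ} (h : k ≤ k') (a : ZMod (p ^ k)) :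
    |(residueCount x N k a : ℝ) - N * (p : ℝ) ^ (-(k : ℤ))| ≤
      √((p : ℝ) ^ k' * ∑ b, ((residueCount x N k' b : ℝ) - N * (p : ℝ) ^ (-(k' : ℤ))) ^ 2) := by
  have : NeZero (p ^ k') := ⟨pow_ne_zero _ (Fact.out : p.Prime).ne_zero⟩
  have hp : (0 : ℝ) < p := by exact_mod_cast (Fact.out : p.Prime).pos
  let g : ZMod (p ^ k') → ℝ := fun b => (residueCount x N k' b : ℝ) - N * (p : ℝ) ^ (-(k' : ℤ))
  let fib : Finset (ZMod (p ^ k')) := {b | ZMod.castHom (pow_dvd_pow p h) (ZMod (p ^ k)) b = a}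
  have hfib : (#fib : ℝ) * (p : ℝ) ^ (-(k' : ℤ)) = (p : ℝ) ^ (-(k : ℤ)) := by
    have hmul : ((p ^ k * #fib : ℕ) : ℝ) = ((p ^ k' : ℕ) : ℝ) :=
      congrArg _ (ZMod.mul_card_filter_castHom_eq (pow_dvd_pow p h) a)
    push_cast at hmul
    have hfib₀ : (#fib : ℝ) ≠ 0 := by
      rintro h₀
      rw [h₀, mul_zero] at hmul
      exact (pow_pos hp k').ne' hmul.symm
    rw [zpow_neg, zpow_neg, zpow_natCast, zpow_natCast, ← hmul]
    field_simp
  have hsplit : (residueCount x N k a : ℝ) - N * (p : ℝ) ^ (-(k : ℤ)) = ∑ b ∈ fib, g b := by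
    rw [residueCount_eq_sum_residueCount x N h a, sum_sub_distrib, sum_const, nsmul_eq_mul, ← hfib]
    push_cast
    ring
  have hcard : (#fib : ℝ) ≤ (p : ℝ) ^ k' := by
    exact_mod_cast (card_le_univ fib).trans (ZMod.card (p ^ k')).le
  rw [hsplit]
  refine Real.abs_le_sqrt ?_
  calc (∑ b ∈ fib, g b) ^ 2 ≤ #fib * ∑ b ∈ fib, g b ^ 2 := sq_sum_le_card_mul_sum_sq
    _ ≤ (p : ℝ) ^ k' * ∑ b, g b ^ 2 :=
      mul_le_mul hcard (sum_le_sum_of_subset_of_nonneg (subset_univ _) fun _ _ _ => sq_nonneg _)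
        (sum_nonneg fun _ _ => sq_nonneg _) (by positivity)

theorem abs_residueCount_toZModPow_sub_le {k k' : ℕ} (h : k' ≤ k) (z : ℤ_[p]) :
    |(residueCount x N k (PadicInt.toZModPow k z) : ℝ) - N * (p : ℝ) ^ (-(k : ℤ))| ≤
      N * (p : ℝ) ^ (-(k' : ℤ)) +
        |(residueCount x N k' (PadicInt.toZModPow k' z) : ℝ) - N * (p : ℝ) ^ (-(k' : ℤ))| := by
  have hp : (1 : ℝ) ≤ p := by exact_mod_cast (Fact.out : p.Prime).one_le
  have hcount : (residueCount x N k (PadicInt.toZModPow k z) : ℝ) ≤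
      residueCount x N k' (PadicInt.toZModPow k' z) := by
    exact_mod_cast residueCount_toZModPow_anti x N h z
  have hmass : (N : ℝ) * (p : ℝ) ^ (-(k : ℤ)) ≤ N * (p : ℝ) ^ (-(k' : ℤ)) := by
    gcongr
  have hmass₀ : (0 : ℝ) ≤ N * (p : ℝ) ^ (-(k : ℤ)) := by positivity
  have hcount₀ : (0 : ℝ) ≤ residueCount x N k (PadicInt.toZModPow k z) := Nat.cast_nonneg _
  rw [abs_sub_le_iff]
  constructor
  · linarith [le_abs_self ((residueCount x N k' (PadicInt.toZModPow k' z) : ℝ) -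
      N * (p : ℝ) ^ (-(k' : ℤ)))]
  · linarith [abs_nonneg ((residueCount x N k' (PadicInt.toZModPow k' z) : ℝ) -
      N * (p : ℝ) ^ (-(k' : ℤ)))]

theorem abs_residueCount_sub_le {k₀ k₁ : ℕ} {E : ℝ} (hk : k₀ ≤ k₁) (hE : 0 ≤ E)
    (hvar : ∀ k, k₀ ≤ k → k ≤ k₁ →
      ∑ a, ((residueCount x N k a : ℝ) - N * (p : ℝ) ^ (-(k : ℤ))) ^ 2 ≤
        N + E * (p : ℝ) ^ (-(k : ℤ)))
    (k : ℕ) (z : ℤ_[p]) :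
    |(residueCount x N k (PadicInt.toZModPow k z) : ℝ) - N * (p : ℝ) ^ (-(k : ℤ))| ≤
      N * (p : ℝ) ^ (-(k₁ : ℤ)) + √((p : ℝ) ^ k₀ * N) + √E := by
  have hp : (1 : ℝ) ≤ p := by exact_mod_cast (Fact.out : p.Prime).one_le
  have hm (k : ℕ) : (p : ℝ) ^ (-(k : ℤ)) ≤ 1 := zpow_le_one_of_nonpos₀ hp (by omega)
  have hsqrt {V : ℝ} (hV : V ≤ (p : ℝ) ^ k₀ * N + E) : √V ≤ √((p : ℝ) ^ k₀ * N) + √E :=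
    (Real.sqrt_le_sqrt hV).trans (Real.sqrt_add_le_sqrt_add_sqrt (by positivity) hE)
  have hmid (k : ℕ) (h₀ : k₀ ≤ k) (h₁ : k ≤ k₁) (a : ZMod (p ^ k)) :
      |(residueCount x N k a : ℝ) - N * (p : ℝ) ^ (-(k : ℤ))| ≤ √((p : ℝ) ^ k₀ * N) + √E := by
    refine (Real.abs_le_sqrt ((single_le_sum (fun b _ => sq_nonneg
      ((residueCount x N k b : ℝ) - N * (p : ℝ) ^ (-(k : ℤ)))) (mem_univ a)).trans
        (hvar k h₀ h₁))).trans (hsqrt ?_)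
    have := one_le_pow₀ (n := k₀) hp
    nlinarith [hm k, mul_le_mul_of_nonneg_left (hm k) hE]
  have hfine₀ : (0 : ℝ) ≤ N * (p : ℝ) ^ (-(k₁ : ℤ)) := by positivity
  rcases lt_or_ge k k₀ with hk₀ | hk₀
  · refine (abs_residueCount_sub_le_sqrt x N hk₀.le _).trans ((hsqrt ?_).trans (by linarith))
    have := mul_le_mul_of_nonneg_left (hvar k₀ le_rfl hk) (by positivity : (0 : ℝ) ≤ (p : ℝ) ^ k₀)
    rw [mul_add, ← mul_assoc, mul_comm _ E, mul_assoc, ← zpow_natCast, ← zpow_add₀ (by positivity),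
      add_neg_cancel, zpow_zero, mul_one] at this
    exact this
  rcases le_or_gt k k₁ with hk₁ | hk₁
  · linarith [hmid k hk₀ hk₁ (PadicInt.toZModPow k z)]
  · linarith [abs_residueCount_toZModPow_sub_le x N hk₁.le z,
      hmid k₁ hk le_rfl (PadicInt.toZModPow k₁ z)]

theorem mul_padicDiscrepancy_le {B : ℝ} (hN : 0 < N)
    (h : ∀ (k : ℕ) (z : ℤ_[p]),
      |(residueCount x N k (PadicInt.toZModPow k z) : ℝ) - N * (p : ℝ) ^ (-(k : ℤ))| ≤ B) :
    N * padicDiscrepancy p x N ≤ B := by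
  have hN' : (0 : ℝ) < N := by exact_mod_cast hN
  rw [← le_div_iff₀' hN', padicDiscrepancy]
  refine ciSup_le fun z => ciSup_le fun k => ?_
  rw [card_filter_mem_padicBall, div_sub' hN'.ne', abs_div, abs_of_pos hN']
  exact div_le_div_of_nonneg_right (h k z) hN'.le

end ResidueCount

theorem mul_padicDiscrepancy_le_of_pairCountLt {p : ℕ} [Fact p.Prime] [MeasurableSpace ℤ_[p]]
    [BorelSpace ℤ_[p]] (μ : Measure ℤ_[p]) [μ.IsAddLeftInvariant] [IsProbabilityMeasure μ]
    (x : ℕ → ℤ_[p]) {N L : ℕ} {A F₀ : ℝ} (hN : 0 < N) (hA : 2 ≤ A) (hLA : L ≤ 2 * A)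
    (hpL : 4 * p ≤ L)
    (hF : ∀ s : ℕ, 1 ≤ s → s ≤ L →
      |(A⁻¹ / (μ (padicBall p 0 (s / A))).toReal) * (pairCountLt p x N (s / A) : ℝ) -
        (N : ℝ) ^ 2 / A| ≤ F₀) :
    N * padicDiscrepancy p x N ≤ 2 * p * N / A + √(2 * p * A * N / L) + √(A * F₀) := by
  have hp : (1 : ℝ) < p := by exact_mod_cast (Fact.out : p.Prime).one_lt
  have hL : (0 : ℝ) < L := by
    have := (Fact.out : p.Prime).pos
    exact_mod_cast (by omega : 0 < L)
  obtain ⟨k₀, k₁, hk, hk₀, hk₀', hk₁, hk₁'⟩ :=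
    exists_pow_scales hp hA hL hLA (by exact_mod_cast hpL)
  have hwindow (k : ℕ) (h₀ : k₀ ≤ k) (h₁ : k ≤ k₁) : ∃ s : ℕ, 1 ≤ s ∧ s ≤ L ∧
      (p : ℝ) ^ (-(k : ℤ)) < s / A ∧ s / A < (p : ℝ) ^ (-(k : ℤ) + 1) := by
    have hpk₀ : (p : ℝ) ^ k₀ ≤ (p : ℝ) ^ k := pow_le_pow_right₀ hp.le h₀
    have hpk₁ : (p : ℝ) ^ k ≤ (p : ℝ) ^ k₁ := pow_le_pow_right₀ hp.le h₁
    rw [zpow_add_one₀ (by positivity), mul_comm, zpow_neg, zpow_natCast]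
    refine exists_nat_div_mem_Ioo (by positivity) ?_ ?_ ?_
    · rw [← div_eq_mul_inv, one_lt_div (by positivity)]; linarith
    · exact_mod_cast (Fact.out : p.Prime).two_le
    · rw [← mul_assoc, ← div_eq_mul_inv, div_le_iff₀ (by positivity)]; nlinarith
  have hF₀ : 0 ≤ F₀ := by
    obtain ⟨s, hs, hsL, -⟩ := hwindow k₀ le_rfl hk
    exact (abs_nonneg _).trans (hF s hs hsL)
  refine mul_padicDiscrepancy_le x N hN fun k z =>
    (abs_residueCount_sub_le x N (E := A * F₀) hk (by positivity) (fun k h₀ h₁ => ?_) k z).trans ?_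
  · obtain ⟨s, hs, hsL, hlo, hhi⟩ := hwindow k h₀ h₁
    exact sum_sq_residueCount_sub_le x N μ (by positivity) hlo hhi (hF s hs hsL)
  · rw [pow_succ] at hk₁'
    rw [zpow_neg, zpow_natCast]
    gcongr
    · rw [← div_eq_mul_inv, div_le_div_iff₀ (by positivity) (by positivity)]; nlinarith
    · rw [le_div_iff₀ hL]; nlinarith

theorem add_sqrt_le_five_mul_max {p N u L E : ℝ} (hp : 0 ≤ p) (hu : 0 < u) (hpu : 2 * p ≤ u ^ 4)
    (hNu : 8 * p * u ^ 3 ≤ N) (hL : u ^ 4 ≤ 4 * L) :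
    2 * p * N / u ^ 5 + √(2 * p * u ^ 5 * N / L) + √E ≤ 5 * max (N / u) √E := by
  have hN : 0 ≤ N := le_trans (by positivity) hNu
  have hL₀ : 0 < L := by nlinarith [pow_pos hu 4]
  have h₁ : 2 * p * N / u ^ 5 ≤ N / u := by
    rw [div_le_div_iff₀ (by positivity) hu]
    nlinarith [mul_le_mul_of_nonneg_left hpu (mul_nonneg hN hu.le)]
  have h₂ : √(2 * p * u ^ 5 * N / L) ≤ N / u := by
    refine Real.sqrt_le_iff.2 ⟨by positivity, ?_⟩
    rw [div_pow, div_le_div_iff₀ hL₀ (by positivity)]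
    nlinarith [mul_le_mul_of_nonneg_left hL (sq_nonneg N),
      mul_le_mul_of_nonneg_left hNu (by positivity : 0 ≤ N * u ^ 4)]
  have h₃ := le_max_left (N / u) √E
  have h₄ := le_max_right (N / u) √E
  linarith [Real.sqrt_nonneg E]

theorem eventually_mul_rpow_le_self (C : ℝ) {β : ℝ} (hβ : β < 1) :
    ∀ᶠ N : ℕ in atTop, C * (N : ℝ) ^ β ≤ N := by
  filter_upwards [((tendsto_rpow_atTop (sub_pos.2 hβ)).comp
    tendsto_natCast_atTop_atTop).eventually_ge_atTop C, eventually_gt_atTop 0] with N hN hN₀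
  have hN₀' : (0 : ℝ) < N := by exact_mod_cast hN₀
  calc C * (N : ℝ) ^ β ≤ (N : ℝ) ^ (1 - β) * (N : ℝ) ^ β := by gcongr; exact hN
    _ = N := by rw [← Real.rpow_add hN₀', sub_add_cancel, Real.rpow_one]

theorem eventually_rpow_div_five_bounds (p : ℝ) {α : ℝ} (hα₀ : 0 < α) (hα₁ : α ≤ 1) :
    ∀ᶠ N : ℕ in atTop, 0 < N ∧ 16 * p ≤ ((N : ℝ) ^ (α / 5)) ^ 4 ∧
      8 * p * ((N : ℝ) ^ (α / 5)) ^ 3 ≤ N ∧ 2 * ((N : ℝ) ^ (α / 5)) ^ 4 ≤ N := by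
  have hpow (N : ℕ) (n : ℕ) : ((N : ℝ) ^ (α / 5)) ^ n = (N : ℝ) ^ (α / 5 * n) :=
    (Real.rpow_mul_natCast (Nat.cast_nonneg N) _ _).symm
  simp only [hpow]
  filter_upwards [eventually_gt_atTop 0,
    ((tendsto_rpow_atTop (y := α / 5 * (4 : ℕ)) (by positivity)).comp
      tendsto_natCast_atTop_atTop).eventually_ge_atTop (16 * p),
    eventually_mul_rpow_le_self (8 * p) (by push_cast; linarith : α / 5 * (3 : ℕ) < 1),
    eventually_mul_rpow_le_self 2 (by push_cast; linarith : α / 5 * (4 : ℕ) < 1)]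
    with N h₀ h₁ h₂ h₃
  exact ⟨h₀, h₁, h₂, h₃⟩

theorem discrepancy_bound_of_pairCorrelation_bound_general
    (p : ℕ) [Fact p.Prime] [MeasurableSpace ℤ_[p]] [BorelSpace ℤ_[p]]
    (μ : Measure ℤ_[p]) [μ.IsAddHaarMeasure] [IsProbabilityMeasure μ]
    (α : ℝ) (hα0 : 0 < α) (hα1 : α ≤ 1) (x : ℕ → ℤ_[p])
    (F : ℕ × ℕ → ℝ)
    (hF : ∀ N K : ℕ, (K : ℝ) ≤ (N : ℝ) / 2 → ∀ s : ℕ, 1 ≤ s → s ≤ K →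
      |((N : ℝ) ^ (-α) / (μ (padicBall p 0 ((s : ℝ) / (N : ℝ) ^ α))).toReal) *
          (pairCountLt p x N ((s : ℝ) / (N : ℝ) ^ α) : ℝ) - (N : ℝ) ^ (2 - α)| < F (K, N)) :
    ∃ N₀ : ℕ, 0 < N₀ ∧ ∀ N : ℕ, N₀ ≤ N → ∀ K : ℕ,
      (1 / 2 : ℝ) * (N : ℝ) ^ ((2 / 5 : ℝ) * α) ≤ (K : ℝ) →
      (K : ℝ) ≤ (N : ℝ) ^ ((2 / 5 : ℝ) * α) →
      (N : ℝ) * padicDiscrepancy p x N ≤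
        5 * max ((N : ℝ) ^ (1 - (1 / 5 : ℝ) * α))
          (Real.sqrt ((N : ℝ) ^ α * F (K ^ 2, N))) := by
  obtain ⟨N₀, hN₀⟩ := eventually_atTop.1 (eventually_rpow_div_five_bounds p hα0 hα1)
  refine ⟨N₀ + 1, N₀.succ_pos, fun N hN K hKlo hKhi => ?_⟩
  obtain ⟨hN, hu₁₆, hu₈, hu₂⟩ := hN₀ N (by omega)
  have hNR : (0 : ℝ) < N := by exact_mod_cast hN
  -- Every exponent in the statement is a multiple of `α / 5`, so in terms of `u = N ^ (α / 5)`
  -- all the estimates become polynomial inequalities in `u` and `N`.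
  set u := (N : ℝ) ^ (α / 5)
  have hu : 1 ≤ u := Real.one_le_rpow (by exact_mod_cast hN) (by positivity)
  have hp : (2 : ℝ) ≤ p := by exact_mod_cast (Fact.out : p.Prime).two_le
  have hpow (e : ℝ) (n : ℕ) (he : e = α / 5 * n) : (N : ℝ) ^ e = u ^ n := by
    rw [he, Real.rpow_mul_natCast hNR.le]
  rw [hpow _ 2 (by push_cast; ring)] at hKlo hKhi
  have hK : u ^ 4 ≤ 4 * ((K ^ 2 : ℕ) : ℝ) ∧ ((K ^ 2 : ℕ) : ℝ) ≤ u ^ 4 := by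
    push_cast; constructor <;> nlinarith
  have hu₅ : u ^ 4 ≤ u ^ 5 := pow_le_pow_right₀ hu (by norm_num)
  have hF' (s : ℕ) (hs : 1 ≤ s) (hsK : s ≤ K ^ 2) :
      |((u ^ 5)⁻¹ / (μ (padicBall p 0 (s / u ^ 5))).toReal) * (pairCountLt p x N (s / u ^ 5) : ℝ) -
        (N : ℝ) ^ 2 / u ^ 5| ≤ F (K ^ 2, N) := by
    have := (hF N (K ^ 2) (by linarith) s hs hsK).le
    rwa [Real.rpow_neg hNR.le, Real.rpow_sub hNR, Real.rpow_two, hpow α 5 (by push_cast; ring)]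
      at this
  rw [Real.rpow_sub hNR, Real.rpow_one, hpow _ 1 (by push_cast; ring), pow_one,
    hpow α 5 (by push_cast; ring)]
  refine (mul_padicDiscrepancy_le_of_pairCountLt μ x hN (by nlinarith) (by linarith)
    (by exact_mod_cast (by nlinarith : (4 * p : ℝ) ≤ ((K ^ 2 : ℕ) : ℝ))) hF').trans ?_
  exact add_sqrt_le_five_mul_max (by positivity) (by positivity) (by linarith) hu₈ hK.1

/-- Lemma: a quantitative bound on the p-adic discrepancy in terms of a bound `F`
on the pair correlation counting function. -/
theorem discrepancy_bound_of_pairCorrelation_bound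
    (p : ℕ) [Fact p.Prime] [MeasurableSpace ℤ_[p]] [BorelSpace ℤ_[p]]
    (μ : Measure ℤ_[p]) [μ.IsAddHaarMeasure] [IsProbabilityMeasure μ]
    (α : ℝ) (hα0 : 0 < α) (hα1 : α ≤ 1) (x : ℕ → ℤ_[p])
    (F : ℕ × ℕ → ℝ)
    (hmono : ∀ K K' N : ℕ, K ≤ K' → F (K, N) ≤ F (K', N))
    (hF : ∀ N K : ℕ, (K : ℝ) ≤ (N : ℝ) / 2 → ∀ s : ℕ, 1 ≤ s → s ≤ K →
      |((N : ℝ) ^ (-α) / (μ (padicBall p 0 ((s : ℝ) / (N : ℝ) ^ α))).toReal) *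
          (pairCountLt p x N ((s : ℝ) / (N : ℝ) ^ α) : ℝ) - (N : ℝ) ^ (2 - α)| < F (K, N)) :
    ∃ N₀ : ℕ, 0 < N₀ ∧ ∀ N : ℕ, N₀ ≤ N → ∀ K : ℕ,
      (1 / 2 : ℝ) * (N : ℝ) ^ ((2 / 5 : ℝ) * α) ≤ (K : ℝ) →
      (K : ℝ) ≤ (N : ℝ) ^ ((2 / 5 : ℝ) * α) →
      (N : ℝ) * padicDiscrepancy p x N ≤
        5 * max ((N : ℝ) ^ (1 - (1 / 5 : ℝ) * α))
          (Real.sqrt ((N : ℝ) ^ α * F (K ^ 2, N))) :=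
  discrepancy_bound_of_pairCorrelation_bound_general p μ α hα0 hα1 x F hF
end

section
/- Let p be a prime and (x_n)_{n∈ℕ} ⊂ ℤ_p. If the p-adic discrepancy satisfies D_N(x_n) = O(N^{−ε}) for some ε with 0 < ε ≤ 1, then (x_n) has weak Poissonian pair correlations for every α with 0 < α < ε. -/
/-!
A ball of radius `t < p` in `ℤ_[p]` is a residue class modulo `p ^ k`, where `p ^ (-k) ≤ t`
and `t < p ^ (1 - k)`, and it has Haar measure `p ^ (-k)`. Counting pairs class by class gives
`#{i ≠ j : |x_i - x_j|_p ≤ t} = ∑_c A_c ^ 2 - N`, where `A_c` is the number of `x_n` in class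
`c`, and the discrepancy bounds each `|A_c / N - p ^ (-k)|`. Expanding the variance
`∑_c (A_c / N - p ^ (-k)) ^ 2` yields `|F_{N,α,p}(s) - 1| ≤ p ^ (2k) D_N ^ 2 + p ^ k / N`, and
`p ^ k < p N ^ α / s`, so the bound is `O(N ^ (2(α - ε)) + N ^ (α - 1)) → 0`.
-/

open MeasureTheory Filter
open scoped Classical

section PadicBalls

variable {p : ℕ} [Fact p.Prime]

theorem norm_sub_le_zpow_iff_toZModPow_eq (k : ℕ) (a b : ℤ_[p]) :
    ‖a - b‖ ≤ (p : ℝ) ^ (-(k : ℤ)) ↔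
      PadicInt.toZModPow k a = PadicInt.toZModPow k b := by
  rw [PadicInt.norm_le_pow_iff_mem_span_pow, ← PadicInt.ker_toZModPow, RingHom.mem_ker,
    map_sub, sub_eq_zero]

theorem padicBall_zpow_eq_preimage (k : ℕ) (z : ℤ_[p]) :
    padicBall p z ((p : ℝ) ^ (-(k : ℤ))) =
      PadicInt.toZModPow k ⁻¹' {PadicInt.toZModPow k z} :=
  Set.ext fun a => norm_sub_le_zpow_iff_toZModPow_eq k a z

theorem exists_norm_le_iff_norm_le_zpow {t : ℝ} (ht0 : 0 < t) (htp : t < p) :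
    ∃ k : ℕ, t < p * (p : ℝ) ^ (-(k : ℤ)) ∧
      ∀ a : ℤ_[p], ‖a‖ ≤ t ↔ ‖a‖ ≤ (p : ℝ) ^ (-(k : ℤ)) := by
  have hp : (1 : ℝ) < p := mod_cast (Fact.out : p.Prime).one_lt
  obtain ⟨n, hnt, htn⟩ := exists_mem_Ico_zpow ht0 hp
  have hn : n ≤ 0 := by
    have : (p : ℝ) ^ n < (p : ℝ) ^ (1 : ℤ) := hnt.trans_lt (by simpa using htp)
    rw [zpow_lt_zpow_iff_right₀ hp] at this
    omega
  refine ⟨n.natAbs, ?_, fun a => ⟨fun ha => ?_, fun ha => ha.trans ?_⟩⟩ <;>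
    rw [show -(n.natAbs : ℤ) = n by omega]
  · rwa [← zpow_one_add₀ (by positivity), add_comm]
  · exact (PadicInt.norm_le_pow_iff_norm_lt_pow_add_one a n).2 (ha.trans_lt htn)
  · exact hnt

theorem measurableSet_padicBall [MeasurableSpace ℤ_[p]] [BorelSpace ℤ_[p]] (z : ℤ_[p])
    (r : ℝ) :
    MeasurableSet (padicBall p z r) := by
  simpa [padicBall, Metric.closedBall, dist_eq_norm] using
    (measurableSet_closedBall : MeasurableSet (Metric.closedBall z r))

theorem measure_padicBall_zpow [MeasurableSpace ℤ_[p]] [BorelSpace ℤ_[p]] (μ : Measure ℤ_[p])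
    [μ.IsAddLeftInvariant] [IsProbabilityMeasure μ] (k : ℕ) (z : ℤ_[p]) :
    μ (padicBall p z ((p : ℝ) ^ (-(k : ℤ)))) = ((p ^ k : ℕ) : ENNReal)⁻¹ := by
  let H := (PadicInt.toZModPow k : ℤ_[p] →+* ZMod (p ^ k)).toAddMonoidHom.ker
  have hH : (H : Set ℤ_[p]) = padicBall p 0 ((p : ℝ) ^ (-(k : ℤ))) := by
    rw [padicBall_zpow_eq_preimage]
    ext a
    simp [H]
  have hindex : H.index = p ^ k := by
    rw [AddSubgroup.index_ker, AddMonoidHom.range_eq_top_of_surjective _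
      (ZMod.ringHom_surjective _)]
    simp
  have hmul := AddSubgroup.index_mul_measure H (hH ▸ measurableSet_padicBall 0 _) μ
  rw [hindex, measure_univ, mul_comm] at hmul
  have hball : padicBall p z ((p : ℝ) ^ (-(k : ℤ))) = (-z + ·) ⁻¹' H := by
    rw [hH]
    ext a
    simp [padicBall, neg_add_eq_sub]
  rw [hball, measure_preimage_add, ENNReal.eq_inv_of_mul_eq_one_left hmul]

end PadicBalls

open Finset in
theorem card_filter_ne_and_eq_add_card_eq_sum_sq {ι M : Type*} [DecidableEq ι] [Fintype M]
    [DecidableEq M] (S : Finset ι) (f : ι → M) :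
    #{ij ∈ S ×ˢ S | ij.1 ≠ ij.2 ∧ f ij.1 = f ij.2} + #S =
      ∑ c, #{i ∈ S | f i = c} ^ 2 := by
  have hdiag : #{ij ∈ S ×ˢ S | ij.1 ≠ ij.2 ∧ f ij.1 = f ij.2} + #S =
      #{ij ∈ S ×ˢ S | f ij.1 = f ij.2} := by
    rw [← card_filter_add_card_filter_not (s := {ij ∈ S ×ˢ S | f ij.1 = f ij.2})
      (fun ij => ij.1 ≠ ij.2), filter_filter, filter_filter, ← diag_card S]
    congr 2
    · ext
      simp only [mem_filter, and_comm]
    · ext ⟨i, j⟩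
      simp only [mem_filter, mem_product, mem_diag, not_not]
      constructor
      · rintro ⟨hi, rfl⟩
        exact ⟨⟨hi, hi⟩, rfl, rfl⟩
      · rintro ⟨⟨hi, -⟩, -, rfl⟩
        exact ⟨hi, rfl⟩
  rw [hdiag, card_eq_sum_card_fiberwise (f := fun ij => f ij.1) (t := univ)
    (fun _ _ => mem_univ _)]
  refine sum_congr rfl fun c _ => ?_
  rw [sq, ← card_product, filter_filter]
  congr 1
  ext ⟨i, j⟩
  simp only [mem_filter, mem_product]
  constructor
  · rintro ⟨⟨hi, hj⟩, hij, rfl⟩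
    exact ⟨⟨hi, rfl⟩, hj, hij.symm⟩
  · rintro ⟨⟨hi, rfl⟩, hj, hji⟩
    exact ⟨⟨hi, hj⟩, hji.symm, rfl⟩

theorem abs_card_mul_sum_sq_sub_div_sq_sub_one_le {M : Type*} [Fintype M] (A : M → ℝ)
    {N D : ℝ} (hN : 0 < N) (hsum : ∑ c, A c = N)
    (hD : ∀ c, |A c / N - (Fintype.card M : ℝ)⁻¹| ≤ D) :
    |Fintype.card M * (∑ c, A c ^ 2 - N) / N ^ 2 - 1| ≤
      (Fintype.card M : ℝ) ^ 2 * D ^ 2 + Fintype.card M / N := by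
  set K : ℝ := (Fintype.card M : ℝ)
  have hK : 0 < K := by
    have : Nonempty M := by
      by_contra hM
      rw [not_nonempty_iff] at hM
      simp [← hsum] at hN
    exact Nat.cast_pos.2 Fintype.card_pos
  set V := ∑ c, (A c / N - K⁻¹) ^ 2
  have hvar : K * (∑ c, A c ^ 2 - N) / N ^ 2 - 1 = K * V - K / N := by
    simp only [V, sub_sq, Finset.sum_add_distrib, Finset.sum_sub_distrib, div_pow,
      ← Finset.sum_div, mul_assoc, ← Finset.mul_sum, ← Finset.sum_mul, Finset.sum_const,
      Finset.card_univ, nsmul_eq_mul, hsum]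
    field_simp
    ring
  have hV : V ≤ K * D ^ 2 := by
    calc V ≤ ∑ _c : M, D ^ 2 :=
          Finset.sum_le_sum fun c _ => sq_le_sq' (abs_le.1 (hD c)).1 (abs_le.1 (hD c)).2
      _ = K * D ^ 2 := by simp [K]
  have hV0 : 0 ≤ V := Finset.sum_nonneg fun c _ => sq_nonneg _
  rw [hvar, abs_sub_le_iff]
  constructor <;> nlinarith [div_pos hK hN]

section Discrepancy

variable {p : ℕ} [Fact p.Prime] (x : ℕ → ℤ_[p]) (N : ℕ)

noncomputable def ballDiscrepancy (z : ℤ_[p]) (k : ℕ) : ℝ :=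
  |(((Finset.Icc 1 N).filter fun n =>
      x n ∈ padicBall p z ((p : ℝ) ^ (-(k : ℤ)))).card : ℝ) / N - (p : ℝ) ^ (-(k : ℤ))|

theorem ballDiscrepancy_le_one (z : ℤ_[p]) (k : ℕ) : ballDiscrepancy x N z k ≤ 1 := by
  have hfreq : (((Finset.Icc 1 N).filter fun n =>
      x n ∈ padicBall p z ((p : ℝ) ^ (-(k : ℤ)))).card : ℝ) / N ≤ 1 := by
    refine div_le_one_of_le₀ ?_ N.cast_nonneg
    exact_mod_cast (Finset.card_filter_le _ _).trans_eq (Nat.card_Icc 1 N)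
  have hball : (p : ℝ) ^ (-(k : ℤ)) ≤ 1 :=
    zpow_le_one_of_nonpos₀ (mod_cast (Fact.out : p.Prime).one_lt.le) (by omega)
  rw [ballDiscrepancy, abs_sub_le_iff]
  constructor <;> linarith [show (0 : ℝ) ≤ (p : ℝ) ^ (-(k : ℤ)) by positivity,
    show (0 : ℝ) ≤ (((Finset.Icc 1 N).filter fun n =>
      x n ∈ padicBall p z ((p : ℝ) ^ (-(k : ℤ)))).card : ℝ) / N by positivity]

theorem ballDiscrepancy_le_padicDiscrepancy (z : ℤ_[p]) (k : ℕ) :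
    ballDiscrepancy x N z k ≤ padicDiscrepancy p x N :=
  le_ciSup_of_le (f := fun w => ⨆ j, ballDiscrepancy x N w j)
    ⟨1, by rintro _ ⟨w, rfl⟩; exact ciSup_le (ballDiscrepancy_le_one x N w)⟩ z
    (le_ciSup ⟨1, by rintro _ ⟨j, rfl⟩; exact ballDiscrepancy_le_one x N z j⟩ k)

end Discrepancy

theorem abs_pairCorrelation_sub_one_le {p : ℕ} [Fact p.Prime] [MeasurableSpace ℤ_[p]]
    [BorelSpace ℤ_[p]] (μ : Measure ℤ_[p]) [μ.IsAddLeftInvariant] [IsProbabilityMeasure μ]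
    (x : ℕ → ℤ_[p]) {N : ℕ} (hN : 0 < N) {t : ℝ} (ht0 : 0 < t) (htp : t < p) :
    |1 / (N : ℝ) ^ 2 * (1 / (μ (padicBall p 0 t)).toReal) * pairCount p x N t - 1| ≤
      (p / t) ^ 2 * padicDiscrepancy p x N ^ 2 + p / t / N := by
  obtain ⟨k, htk, hnorm⟩ := exists_norm_le_iff_norm_le_zpow ht0 htp
  let f : ℕ → ZMod (p ^ k) := fun n => PadicInt.toZModPow k (x n)
  let A : ZMod (p ^ k) → ℝ := fun c => ((Finset.Icc 1 N).filter fun n => f n = c).card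
  set K : ℝ := (Fintype.card (ZMod (p ^ k)) : ℝ)
  have hK : K = ((p : ℝ) ^ (-(k : ℤ)))⁻¹ := by
    simp [K, ZMod.card]
  have hμ : (μ (padicBall p 0 t)).toReal = (p : ℝ) ^ (-(k : ℤ)) := by
    rw [show padicBall p 0 t = padicBall p 0 ((p : ℝ) ^ (-(k : ℤ))) from
      Set.ext fun a => hnorm (a - 0), measure_padicBall_zpow, ENNReal.toReal_inv]
    simp
  have hcount : (pairCount p x N t : ℝ) = ∑ c, A c ^ 2 - N := by
    have hpairs : pairCount p x N t =
        ((Finset.Icc 1 N ×ˢ Finset.Icc 1 N).filter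
          fun ij => ij.1 ≠ ij.2 ∧ f ij.1 = f ij.2).card := by
      rw [pairCount]
      congr 1
      refine Finset.filter_congr fun ij _ => ?_
      rw [hnorm, norm_sub_le_zpow_iff_toZModPow_eq]
    have := card_filter_ne_and_eq_add_card_eq_sum_sq (Finset.Icc 1 N) f
    rw [Nat.card_Icc, Nat.add_sub_cancel, ← hpairs] at this
    rw [eq_sub_iff_add_eq]
    simp only [A]
    exact_mod_cast this
  have hsum : ∑ c, A c = N := by
    have := (Finset.card_eq_sum_card_fiberwise (s := Finset.Icc 1 N) (t := Finset.univ)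
      (fun n _ => Finset.mem_univ (f n))).symm
    rw [Nat.card_Icc, Nat.add_sub_cancel] at this
    simp only [A]
    exact_mod_cast this
  have hD : ∀ c, |A c / N - K⁻¹| ≤ padicDiscrepancy p x N := by
    intro c
    obtain ⟨z, rfl⟩ := ZMod.ringHom_surjective (PadicInt.toZModPow k) c
    calc _ = ballDiscrepancy x N z k := by
          rw [ballDiscrepancy, padicBall_zpow_eq_preimage, hK, inv_inv]
          simp only [A, f, Set.mem_preimage, Set.mem_singleton_iff]
      _ ≤ _ := ballDiscrepancy_le_padicDiscrepancy x N z k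
  have hKt : K ≤ p / t := by
    have hδ : (0 : ℝ) < (p : ℝ) ^ (-(k : ℤ)) :=
      zpow_pos (mod_cast (Fact.out : p.Prime).pos) _
    rw [hK, inv_eq_one_div, div_le_div_iff₀ hδ ht0]
    linarith
  calc _ = |K * (∑ c, A c ^ 2 - N) / N ^ 2 - 1| := by
        rw [hμ, hcount, hK]
        congr 1
        ring
    _ ≤ K ^ 2 * padicDiscrepancy p x N ^ 2 + K / N :=
        abs_card_mul_sum_sq_sub_div_sq_sub_one_le A (mod_cast hN) hsum hD
    _ ≤ _ := by gcongr

theorem tendsto_natCast_rpow_nhds_zero_of_neg {r : ℝ} (hr : r < 0) :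
    Tendsto (fun N : ℕ => (N : ℝ) ^ r) atTop (nhds 0) := by
  simpa [Function.comp_def] using
    (tendsto_rpow_neg_atTop (neg_pos.2 hr)).comp tendsto_natCast_atTop_atTop

theorem eventually_norm_pairF_sub_one_le {p : ℕ} [Fact p.Prime] [MeasurableSpace ℤ_[p]]
    [BorelSpace ℤ_[p]] (μ : Measure ℤ_[p]) [μ.IsAddLeftInvariant] [IsProbabilityMeasure μ]
    (x : ℕ → ℤ_[p]) {α ε C s : ℝ} (hα : 0 < α) (hs : 0 < s)
    (hC : ∀ᶠ N : ℕ in atTop, ‖padicDiscrepancy p x N‖ ≤ C * ‖(N : ℝ) ^ (-ε)‖) :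
    ∀ᶠ N : ℕ in atTop, ‖pairF p μ x α N s - 1‖ ≤
      (p * C / s) ^ 2 * ((N : ℝ) ^ (α - ε)) ^ 2 + p / s * (N : ℝ) ^ (α - 1) := by
  have hp : (1 : ℝ) < p := mod_cast (Fact.out : p.Prime).one_lt
  filter_upwards [eventually_gt_atTop 0, hC,
    ((tendsto_rpow_atTop hα).comp tendsto_natCast_atTop_atTop).eventually_gt_atTop s]
    with N hN hD hsN
  have hNα : (0 : ℝ) < (N : ℝ) ^ α := by positivity
  have hD2 : padicDiscrepancy p x N ^ 2 ≤ (C * (N : ℝ) ^ (-ε)) ^ 2 := by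
    rw [Real.norm_eq_abs, Real.norm_of_nonneg (by positivity)] at hD
    exact sq_le_sq' (abs_le.1 hD).1 (abs_le.1 hD).2
  calc ‖pairF p μ x α N s - 1‖
      ≤ (p / (s / N ^ α)) ^ 2 * padicDiscrepancy p x N ^ 2 + p / (s / N ^ α) / N :=
        abs_pairCorrelation_sub_one_le μ x hN (by positivity) (((div_lt_one hNα).2 hsN).trans hp)
    _ ≤ (p / (s / N ^ α)) ^ 2 * (C * (N : ℝ) ^ (-ε)) ^ 2 + p / (s / N ^ α) / N := by
        gcongr
    _ = (p * C / s) ^ 2 * ((N : ℝ) ^ (α - ε)) ^ 2 + p / s * (N : ℝ) ^ (α - 1) := by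
        rw [Real.rpow_sub (by positivity), Real.rpow_sub (by positivity),
          Real.rpow_neg (by positivity), Real.rpow_one]
        field_simp

theorem hasWeakPPC_of_discrepancy_isBigO_general
    (p : ℕ) [Fact p.Prime] [MeasurableSpace ℤ_[p]] [BorelSpace ℤ_[p]]
    (μ : Measure ℤ_[p]) [μ.IsAddHaarMeasure] [IsProbabilityMeasure μ]
    (x : ℕ → ℤ_[p]) (ε : ℝ) (hε1 : ε ≤ 1)
    (h : (fun N : ℕ => padicDiscrepancy p x N) =O[atTop] fun N : ℕ => (N : ℝ) ^ (-ε)) :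
    ∀ α : ℝ, 0 < α → α < ε → HasWeakPPC p μ x α := by
  intro α hα hαε s hs
  obtain ⟨C, hC⟩ := h.bound
  have hlim : Tendsto (fun N : ℕ => (p * C / s) ^ 2 * ((N : ℝ) ^ (α - ε)) ^ 2 +
      p / s * (N : ℝ) ^ (α - 1)) atTop (nhds 0) := by
    simpa using
      (((tendsto_natCast_rpow_nhds_zero_of_neg (sub_neg.2 hαε)).pow 2).const_mul _).add
        ((tendsto_natCast_rpow_nhds_zero_of_neg (by linarith : α - 1 < 0)).const_mul _)
  rw [tendsto_iff_norm_sub_tendsto_zero]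
  exact squeeze_zero' (.of_forall fun _ => norm_nonneg _)
    (eventually_norm_pairF_sub_one_le μ x hα hs hC) hlim

/-- Proposition: if the p-adic discrepancy of a sequence satisfies
`D_N = O(N^{-ε})` for some `0 < ε ≤ 1`, then the sequence has weak Poissonian
pair correlations for every `0 < α < ε`. -/
theorem hasWeakPPC_of_discrepancy_isBigO
    (p : ℕ) [Fact p.Prime] [MeasurableSpace ℤ_[p]] [BorelSpace ℤ_[p]]
    (μ : Measure ℤ_[p]) [μ.IsAddHaarMeasure] [IsProbabilityMeasure μ]
    (x : ℕ → ℤ_[p]) (ε : ℝ) (hε0 : 0 < ε) (hε1 : ε ≤ 1)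
    (h : (fun N : ℕ => padicDiscrepancy p x N) =O[atTop] fun N : ℕ => (N : ℝ) ^ (-ε)) :
    ∀ α : ℝ, 0 < α → α < ε → HasWeakPPC p μ x α :=
  hasWeakPPC_of_discrepancy_isBigO_general p μ x ε hε1 h
end

section
/- Let p be a prime, let x_1, …, x_N ∈ ℤ_p with p-adic discrepancy D_N, and let 0 < s ≤ 1. Then | (1/N²)·#{1 ≤ i ≠ j ≤ N : |x_i − x_j|_p ≤ s} − μ(D_p(0,s)) | ≤ D_N + 2/N. -/
open MeasureTheory Filter
open scoped Classical

/-!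
Since p-adic norms only take the values `p^{-n}` and `0`, the radius `s` may be replaced by the
largest `p^{-k} ≤ s`, and the ball of that radius is a subgroup of index `p^k`, of measure `p^{-k}`.
The pair count is `∑ᵢ (Aᵢ - 1)` with `Aᵢ = #{j : x_j ∈ D_p(x_i, p^{-k})}`, and by definition of the
discrepancy each `Aᵢ / N` lies within `D_N` of `p^{-k}`; averaging over `i`, the diagonal terms
`i = j` cost the extra `1/N`.
-/

namespace PadicInt

variable {p : ℕ} [Fact p.Prime]

theorem exists_norm_le_iff_norm_le_pow {s : ℝ} (hs : 0 < s) :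
    ∃ k : ℕ, ∀ y : ℤ_[p], ‖y‖ ≤ s ↔ ‖y‖ ≤ (p : ℝ) ^ (-(k : ℤ)) := by
  have hex : ∃ m : ℕ, (p : ℝ) ^ (-(m : ℤ)) ≤ s :=
    (exists_pow_neg_lt p hs).imp fun _ h => h.le
  refine ⟨Nat.find hex, fun y => ⟨fun hy => ?_, fun hy => hy.trans (Nat.find_spec hex)⟩⟩
  rcases eq_or_ne y 0 with rfl | hy0
  · simp
  rw [norm_le_pow_iff_le_valuation y hy0]
  refine Nat.find_min' hex ?_
  rwa [← norm_eq_zpow_neg_valuation hy0]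

theorem closedBall_zero_pow_eq_ker (k : ℕ) :
    Metric.closedBall (0 : ℤ_[p]) ((p : ℝ) ^ (-(k : ℤ))) =
      ((toZModPow k : ℤ_[p] →+* ZMod (p ^ k)) : ℤ_[p] →+ ZMod (p ^ k)).ker := by
  ext y
  rw [mem_closedBall_zero_iff, norm_le_pow_iff_mem_span_pow, ← ker_toZModPow]
  rfl

theorem pow_mul_measure_closedBall_zero [MeasurableSpace ℤ_[p]] [BorelSpace ℤ_[p]]
    (μ : Measure ℤ_[p]) [μ.IsAddLeftInvariant] (k : ℕ) :
    (p : ENNReal) ^ k * μ (Metric.closedBall 0 ((p : ℝ) ^ (-(k : ℤ)))) = μ Set.univ := by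
  set H := ((toZModPow k : ℤ_[p] →+* ZMod (p ^ k)) : ℤ_[p] →+ ZMod (p ^ k)).ker
  have hindex : H.index = p ^ k := by
    rw [AddSubgroup.index_ker, AddMonoidHom.range_eq_top.mpr (ZMod.ringHom_surjective _)]
    simp
  have : H.FiniteIndex := ⟨by rw [hindex]; exact pow_ne_zero _ (Fact.out : p.Prime).ne_zero⟩
  rw [closedBall_zero_pow_eq_ker, ← AddSubgroup.index_mul_measure H _ μ, hindex]
  · push_cast; rfl
  · rw [← closedBall_zero_pow_eq_ker]; exact Metric.isClosed_closedBall.measurableSet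

theorem measure_closedBall_zero_pow [MeasurableSpace ℤ_[p]] [BorelSpace ℤ_[p]]
    (μ : Measure ℤ_[p]) [μ.IsAddLeftInvariant] [IsProbabilityMeasure μ]
    (k : ℕ) : μ (Metric.closedBall 0 ((p : ℝ) ^ (-(k : ℤ)))) = ((p : ENNReal) ^ k)⁻¹ := by
  refine ENNReal.eq_inv_of_mul_eq_one_left ?_
  rw [mul_comm, pow_mul_measure_closedBall_zero, measure_univ]

end PadicInt

theorem Finset.card_filter_offDiag_add_card {α : Type*} [DecidableEq α] (T : Finset α)
    (r : α → α → Prop) [DecidableRel r] (hr : ∀ i, r i i) :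
    ((T ×ˢ T).filter fun ij => ij.1 ≠ ij.2 ∧ r ij.1 ij.2).card + T.card =
      ∑ i ∈ T, (T.filter (r i)).card := by
  rw [card_filter, sum_product, card_eq_sum_ones, ← sum_add_distrib]
  refine sum_congr rfl fun i hi => ?_
  rw [← card_filter, ← card_erase_add_one (mem_filter.mpr ⟨hi, hr i⟩)]
  congr 2
  ext j
  simp only [mem_filter, mem_erase]
  tauto

theorem Finset.abs_sum_sub_card_mul_le {ι : Type*} (T : Finset ι) {a : ι → ℝ} {c D : ℝ}
    (h : ∀ i ∈ T, |a i - c| ≤ D) : |∑ i ∈ T, a i - T.card * c| ≤ T.card * D := by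
  rw [← nsmul_eq_mul, ← sum_const, ← sum_sub_distrib, ← nsmul_eq_mul, ← sum_const]
  exact (abs_sum_le_sum_abs _ _).trans (sum_le_sum h)

theorem abs_sub_div_sq_sub_le {S N c D : ℝ} (hN : 0 < N) (h : |S / N - N * c| ≤ N * D) :
    |(S - N) / N ^ 2 - c| ≤ D + 1 / N := by
  have hsplit : (S - N) / N ^ 2 - c = (S / N - N * c) / N - 1 / N := by
    field_simp
    ring
  calc |(S - N) / N ^ 2 - c| ≤ |S / N - N * c| / N + 1 / N := by
        simpa [hsplit, abs_div, abs_of_pos hN] using abs_sub ((S / N - N * c) / N) (1 / N)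
    _ ≤ D + 1 / N := by gcongr; exact (div_le_iff₀ hN).2 (by linarith)

theorem le_padicDiscrepancy {p : ℕ} [Fact p.Prime] (x : ℕ → ℤ_[p]) (N : ℕ) (z : ℤ_[p]) (k : ℕ) :
    |(((Finset.Icc 1 N).filter fun n =>
        x n ∈ padicBall p z ((p : ℝ) ^ (-(k : ℤ)))).card : ℝ) / N - (p : ℝ) ^ (-(k : ℤ))| ≤
      padicDiscrepancy p x N := by
  have hle_one : ∀ z (k : ℕ), |(((Finset.Icc 1 N).filter fun n =>
        x n ∈ padicBall p z ((p : ℝ) ^ (-(k : ℤ)))).card : ℝ) / N - (p : ℝ) ^ (-(k : ℤ))| ≤ 1 := by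
    intro z k
    refine abs_sub_le_of_nonneg_of_le (by positivity) ?_ (by positivity) ?_
    · refine div_le_one_of_le₀ ?_ N.cast_nonneg
      exact_mod_cast (Finset.card_filter_le _ _).trans (by simp)
    · exact zpow_le_one_of_nonpos₀ (mod_cast (Fact.out : p.Prime).one_le) (by simp)
  refine le_ciSup_of_le ⟨1, ?_⟩ z ?_
  · rintro _ ⟨z, rfl⟩
    exact ciSup_le (hle_one z)
  · apply le_ciSup _ k
    exact ⟨1, by rintro _ ⟨k, rfl⟩; exact hle_one z k⟩

theorem pairCount_deviation_le_discrepancy_general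
    (p : ℕ) [Fact p.Prime] [MeasurableSpace ℤ_[p]] [BorelSpace ℤ_[p]]
    (μ : Measure ℤ_[p]) [μ.IsAddHaarMeasure] [IsProbabilityMeasure μ]
    (x : ℕ → ℤ_[p]) (N : ℕ) (hN : 1 ≤ N) (s : ℝ) (hs0 : 0 < s) :
    |(pairCount p x N s : ℝ) / (N : ℝ) ^ 2 - (μ (padicBall p 0 s)).toReal| ≤
      padicDiscrepancy p x N + 2 / (N : ℝ) := by
  obtain ⟨k, hk⟩ := PadicInt.exists_norm_le_iff_norm_le_pow (p := p) hs0
  set c : ℝ := (p : ℝ) ^ (-(k : ℤ))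
  set T := Finset.Icc 1 N
  set A : ℕ → ℝ := fun i => (T.filter fun j => ‖x i - x j‖ ≤ s).card
  have hμ : (μ (padicBall p 0 s)).toReal = c := by
    have hball : padicBall p 0 s = Metric.closedBall 0 c := by
      ext y; simp [padicBall, hk]
    rw [hball, PadicInt.measure_closedBall_zero_pow]
    simp [c]
  have hcount : (pairCount p x N s : ℝ) + N = ∑ i ∈ T, A i := by
    have h := T.card_filter_offDiag_add_card (fun i j => ‖x i - x j‖ ≤ s) (by simp [hs0.le])
    rw [Nat.card_Icc, Nat.add_sub_cancel] at h
    simp only [A]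
    exact_mod_cast h
  have hA : ∀ i ∈ T, |A i / N - c| ≤ padicDiscrepancy p x N := fun i _ => by
    convert le_padicDiscrepancy x N (x i) k using 6
    ext j
    simp [padicBall, hk, norm_sub_rev (x i), T, c]
  have hsum := T.abs_sum_sub_card_mul_le hA
  rw [Nat.card_Icc, Nat.add_sub_cancel, ← Finset.sum_div] at hsum
  have hN0 : (0 : ℝ) < N := by exact_mod_cast hN
  rw [hμ, eq_sub_of_add_eq hcount]
  calc _ ≤ padicDiscrepancy p x N + 1 / N := abs_sub_div_sq_sub_le hN0 hsum
    _ ≤ padicDiscrepancy p x N + 2 / N := by gcongr; norm_num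

/-- For points `x_1, …, x_N ∈ ℤ_p` with p-adic discrepancy `D_N` and `0 < s ≤ 1`,
the normalized pair count of differences deviates from `μ(D_p(0,s))` by at most
`D_N + 2/N`. -/
theorem pairCount_deviation_le_discrepancy
    (p : ℕ) [Fact p.Prime] [MeasurableSpace ℤ_[p]] [BorelSpace ℤ_[p]]
    (μ : Measure ℤ_[p]) [μ.IsAddHaarMeasure] [IsProbabilityMeasure μ]
    (x : ℕ → ℤ_[p]) (N : ℕ) (hN : 1 ≤ N) (s : ℝ) (hs0 : 0 < s) (hs1 : s ≤ 1) :
    |(pairCount p x N s : ℝ) / (N : ℝ) ^ 2 - (μ (padicBall p 0 s)).toReal| ≤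
      padicDiscrepancy p x N + 2 / (N : ℝ) :=
  pairCount_deviation_le_discrepancy_general p μ x N hN s hs0
end
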